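/- arXiv:1704.02364 — 9 statements merged into one kernel-verified Lean document; each statement's English description precedes it below -/
import Mathlib

section
/- Let G = (V, E) be a finite directed graph in which every vertex has in-degree at most d (for an integer d ≥ 1), let B : V → ℕ be capacities, let u ∈ V, and let ε ∈ (0, 1/2]. Let (A_i)_{i ∈ V} be mutually independent ℕ-valued random variables on a probability space such that E[exp(ε(A_i − B_i))] ≤ ε²/(e·d) for every i ∈ V. Then the probability that there exists a rooted subtree T of G at u with ℓ_u^T(A) ≥ B_u is at most ε. -/
open MeasureTheory ProbabilityTheory

variable {V : Type*} [Fintype V] [DecidableEq V]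

/-- A rooted subtree of the finite directed graph `(V, E)` at the vertex `u`: a set `S` of
vertices containing `u` together with a next-step map `nxt` defined on `S \ {u}` (extended
arbitrarily elsewhere) following edges of `E`, from which iteration reaches `u`. -/
structure RootedSubtree (V : Type*) [Fintype V] (E : V → V → Prop) (u : V) where
  S : Finset V
  nxt : V → V
  root_mem : u ∈ S
  nxt_mem : ∀ v ∈ S, v ≠ u → nxt v ∈ S
  edge : ∀ v ∈ S, v ≠ u → E v (nxt v)
  reach : ∀ v ∈ S, ∃ n, nxt^[n] v = u

/-- The children of `v` in the rooted subtree `T` at root `u`: the nodes `w ∈ S \ {u}`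
with `nxt w = v`. -/
def subChildren {E : V → V → Prop} {u : V} (T : RootedSubtree V E u) (v : V) : Finset V :=
  T.S.filter (fun w => w ≠ u ∧ T.nxt w = v)

/-- Fuel-indexed recursion for the forwarded counts in a rooted subtree:
`F_v(a) = max(a_v + Σ_{w child of v} F_w(a) − B_v, 0)` (truncated `ℕ` subtraction realizes
the `max(·, 0)`).  Every branch of a rooted subtree has length less than `card V`, so fuel
`card V` computes the structurally recursive value. -/
def subForwardAux {E : V → V → Prop} {u : V} (T : RootedSubtree V E u)
    (B a : V → ℕ) : ℕ → V → ℕ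
  | 0, v => a v - B v
  | n + 1, v => a v + (∑ w ∈ subChildren T v, subForwardAux T B a n w) - B v

/-- The forwarded count `F_v(a)` at node `v` of the rooted subtree `T`. -/
def subForward {E : V → V → Prop} {u : V} (T : RootedSubtree V E u)
    (B a : V → ℕ) (v : V) : ℕ :=
  subForwardAux T B a (Fintype.card V) v

/-- The load `ℓ_u^T(a) = a_u + Σ_{w child of u} F_w(a)` at the root `u` of `T`. -/
def rootLoad {E : V → V → Prop} {u : V} (T : RootedSubtree V E u) (B a : V → ℕ) : ℕ :=
  a u + ∑ w ∈ subChildren T u, subForward T B a w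

/-
If some rooted subtree overloads `u`, keeping only the nodes whose path to `u` forwards a
positive amount at every step leaves a tree `S ∋ u` on which the positive forwarded counts
telescope, so that the total arrival on `S` reaches its total capacity. By independence and
Markov's inequality a fixed `S` has this property with probability at most `q ^ |S|`, where
`q = ε²/(e·d)`. Splitting a tree at its root gives `W_{n+1} ≤ q (1 + W_n)^d` for the total
weight `W_n` of the trees of height `< n` at a vertex, and `q (1 + c)^d ≤ q e^{ε²} ≤ c` for
`c = ε²/d`, so by induction `W_n ≤ c ≤ ε`.
-/

open Finset Function
open scoped ENNReal

section Chernoff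

variable {Ω ι : Type*} [MeasurableSpace Ω] {μ : Measure Ω}

theorem measure_one_le_prod_le_pow (Y : ι → Ω → ℝ≥0∞) (hY : iIndepFun Y μ)
    (hmeas : ∀ i, Measurable (Y i)) (S : Finset ι) (r : ℝ≥0∞)
    (hr : ∀ i ∈ S, ∫⁻ ω, Y i ω ∂μ ≤ r) :
    μ {ω | 1 ≤ ∏ i ∈ S, Y i ω} ≤ r ^ #S := by
  calc μ {ω | 1 ≤ ∏ i ∈ S, Y i ω}
      ≤ ∫⁻ ω, ∏ i ∈ S, Y i ω ∂μ := by
        simpa using mul_meas_ge_le_lintegral (μ := μ) (by fun_prop) 1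
    _ = ∏ i ∈ S, ∫⁻ ω, Y i ω ∂μ := lintegral_prod_eq_prod_lintegral_of_indepFun S Y hY hmeas
    _ ≤ r ^ #S := prod_le_pow_card S _ r hr

theorem measure_sum_le_sum_le_pow (A : ι → Ω → ℕ) (hAmeas : ∀ i, Measurable (A i))
    (hindep : iIndepFun A μ) (B : ι → ℕ) {t : ℝ} (ht : 0 ≤ t) (r : ℝ≥0∞)
    (hr : ∀ i, ∫⁻ ω, ENNReal.ofReal (Real.exp (t * ((A i ω : ℝ) - (B i : ℝ)))) ∂μ ≤ r)
    (S : Finset ι) :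
    μ {ω | ∑ i ∈ S, B i ≤ ∑ i ∈ S, A i ω} ≤ r ^ #S := by
  let g : ι → ℕ → ℝ≥0∞ := fun i n => ENNReal.ofReal (Real.exp (t * ((n : ℝ) - B i)))
  refine le_trans (measure_mono fun ω hω => ?_)
    (measure_one_le_prod_le_pow (fun i => g i ∘ A i)
      (hindep.comp g fun i => measurable_of_countable _)
      (fun i => (measurable_of_countable _).comp (hAmeas i)) S r fun i _ => hr i)
  have hsum : (∑ i ∈ S, B i : ℝ) ≤ ∑ i ∈ S, (A i ω : ℝ) := by exact_mod_cast hω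
  simp only [Set.mem_ofPred_eq, comp_apply, g]
  rw [← ENNReal.ofReal_prod_of_nonneg fun i _ => (Real.exp_pos _).le, ← Real.exp_sum,
    ENNReal.one_le_ofReal, Real.one_le_exp_iff, ← mul_sum, sum_sub_distrib]
  exact mul_nonneg ht (sub_nonneg.2 hsum)

end Chernoff

section Counting

/-- `S` is the vertex set of a tree of height `< n` rooted at `v` whose edges `w → parent` are
edges of `E`; `g w` is the subtree at the in-neighbour `w`, empty if `w` is not a child. -/
inductive IsTreeSet (E : V → V → Prop) : ℕ → V → Finset V → Prop
  | node {n : ℕ} {v : V} (g : V → Finset V)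
      (edge : ∀ w, g w ≠ ∅ → E w v)
      (subtree : ∀ w, g w ≠ ∅ → IsTreeSet E n w (g w))
      (disjoint : Pairwise (Disjoint on g))
      (root_notMem : v ∉ univ.biUnion g) :
      IsTreeSet E (n + 1) v (insert v (univ.biUnion g))

variable {E : V → V → Prop}

open Classical in
noncomputable def treeSets (E : V → V → Prop) (n : ℕ) (v : V) : Finset (Finset V) :=
  univ.filter (IsTreeSet E n v)

theorem mem_treeSets {n : ℕ} {v : V} {S : Finset V} :
    S ∈ treeSets E n v ↔ IsTreeSet E n v S := by
  simp [treeSets]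

theorem IsTreeSet.root_mem {n : ℕ} {v : V} {S : Finset V} (h : IsTreeSet E n v S) : v ∈ S := by
  cases h
  exact mem_insert_self _ _

open Classical in
noncomputable def branchChoices (E : V → V → Prop) (n : ℕ) (v w : V) : Finset (Finset V) :=
  if E w v then insert ∅ (treeSets E n w) else {∅}

theorem mem_branchChoices {n : ℕ} {v w : V} {s : Finset V} :
    s ∈ branchChoices E n v w ↔ s = ∅ ∨ E w v ∧ IsTreeSet E n w s := by
  unfold branchChoices
  split_ifs with h <;> simp [mem_treeSets, h]

open Classical in
theorem treeSets_succ_subset (n : ℕ) (v : V) :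
    treeSets E (n + 1) v ⊆ ((Fintype.piFinset (branchChoices E n v)).filter
      fun g => Pairwise (Disjoint on g) ∧ v ∉ univ.biUnion g).image
        fun g => insert v (univ.biUnion g) := by
  intro S hS
  obtain ⟨g, hE, hg, hdisj, hv⟩ := mem_treeSets.1 hS
  refine mem_image.2 ⟨g, mem_filter.2 ⟨Fintype.mem_piFinset.2 fun w => ?_, hdisj, hv⟩, rfl⟩
  rw [mem_branchChoices, or_iff_not_imp_left]
  exact fun hw => ⟨hE w hw, hg w hw⟩

variable {R : Type*} [CommSemiring R] [PartialOrder R] [IsOrderedRing R] {q c : R}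

open Classical in
theorem sum_branchChoices_le {n : ℕ} {v w : V} (hc : ∑ S ∈ treeSets E n w, q ^ #S ≤ c) :
    ∑ s ∈ branchChoices E n v w, q ^ #s ≤ if E w v then 1 + c else 1 := by
  unfold branchChoices
  split_ifs
  · rw [sum_insert fun h => notMem_empty w (mem_treeSets.1 h).root_mem]
    simp only [card_empty, pow_zero]
    gcongr
  · simp

theorem sum_treeSets_succ_le (hq : 0 ≤ q) (n : ℕ) (v : V) :
    ∑ S ∈ treeSets E (n + 1) v, q ^ #S ≤ q * ∏ w, ∑ s ∈ branchChoices E n v w, q ^ #s := by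
  classical
  set P := (Fintype.piFinset (branchChoices E n v)).filter
    fun g => Pairwise (Disjoint on g) ∧ v ∉ univ.biUnion g
  have hcard : ∀ g ∈ P, #(insert v (univ.biUnion g)) = ∑ w, #(g w) + 1 := fun g hg => by
    obtain ⟨-, hdisj, hv⟩ := mem_filter.1 hg
    rw [card_insert_of_notMem hv, card_biUnion fun w _ w' _ hne => hdisj hne]
  calc ∑ S ∈ treeSets E (n + 1) v, q ^ #S
      ≤ ∑ S ∈ P.image fun g => insert v (univ.biUnion g), q ^ #S :=
        sum_le_sum_of_subset_of_nonneg (treeSets_succ_subset n v) fun _ _ _ => pow_nonneg hq _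
    _ ≤ ∑ g ∈ P, q ^ #(insert v (univ.biUnion g)) :=
        sum_image_le_of_nonneg fun _ _ => pow_nonneg hq _
    _ = ∑ g ∈ P, q * ∏ w, q ^ #(g w) := sum_congr rfl fun g hg => by
        rw [hcard g hg, pow_succ, prod_pow_eq_pow_sum, mul_comm]
    _ ≤ ∑ g ∈ Fintype.piFinset (branchChoices E n v), q * ∏ w, q ^ #(g w) :=
        sum_le_sum_of_subset_of_nonneg (filter_subset _ _) fun _ _ _ =>
          mul_nonneg hq (prod_nonneg fun _ _ => pow_nonneg hq _)
    _ = q * ∏ w, ∑ s ∈ branchChoices E n v w, q ^ #s := by rw [prod_univ_sum, mul_sum]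

theorem sum_treeSets_le (hq : 0 ≤ q) (hc : 0 ≤ c) {d : ℕ} (hdeg : ∀ v, {w | E w v}.ncard ≤ d)
    (hstep : q * (1 + c) ^ d ≤ c) (n : ℕ) (v : V) : ∑ S ∈ treeSets E n v, q ^ #S ≤ c := by
  classical
  induction n generalizing v with
  | zero =>
    have : treeSets E 0 v = ∅ := eq_empty_of_forall_notMem fun S hS => by
      cases mem_treeSets.1 hS
    simpa [this] using hc
  | succ n ih =>
    calc ∑ S ∈ treeSets E (n + 1) v, q ^ #S
        ≤ q * ∏ w, ∑ s ∈ branchChoices E n v w, q ^ #s := sum_treeSets_succ_le hq n v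
      _ ≤ q * ∏ w, (if E w v then 1 + c else 1) := by
          gcongr with w
          exact sum_branchChoices_le (ih w)
      _ = q * (1 + c) ^ {w | E w v}.ncard := by
          rw [prod_ite, prod_const, prod_const_one, mul_one, ← Set.ncard_coe_finset,
            coe_filter_univ]
      _ ≤ q * (1 + c) ^ d := by
          gcongr
          · exact le_add_of_nonneg_right hc
          · exact hdeg v
      _ ≤ c := hstep

end Counting

def excess (B a : V → ℕ) (S : Finset V) : ℤ :=
  ∑ x ∈ S, ((a x : ℤ) - B x)

namespace RootedSubtree

variable {E : V → V → Prop} {u : V} (T : RootedSubtree V E u)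

open Classical in
noncomputable def depth (x : V) : ℕ :=
  if h : ∃ n, T.nxt^[n] x = u then Nat.find h else 0

theorem depth_eq_depth_nxt_add_one {x : V} (hx : x ∈ T.S) (hxu : x ≠ u) :
    T.depth x = T.depth (T.nxt x) + 1 := by
  have h₁ := T.reach x hx
  have h₂ := T.reach _ (T.nxt_mem x hx hxu)
  classical
  simp only [depth, dif_pos h₁, dif_pos h₂]
  exact Nat.find_comp_succ h₁ h₂ hxu

theorem depth_of_mem_subChildren {v w : V} (hw : w ∈ subChildren T v) :
    T.depth w = T.depth v + 1 := by
  obtain ⟨hwS, hwu, rfl⟩ := mem_filter.1 hw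
  exact T.depth_eq_depth_nxt_add_one hwS hwu

/-- The descendants of `v`. Measuring along depths ensures that paths do not run through `u`,
where `nxt` is arbitrary. -/
def below (v : V) : Set V :=
  {x | T.depth v ≤ T.depth x ∧ T.nxt^[T.depth x - T.depth v] x = v}

theorem mem_below_self (v : V) : v ∈ T.below v := by
  simp [below]

variable {T}

theorem below_subset_below {v w : V} (hw : w ∈ subChildren T v) : T.below w ⊆ T.below v := by
  have hdepth := T.depth_of_mem_subChildren hw
  rintro x ⟨hle, hx⟩
  refine ⟨by omega, ?_⟩
  rw [show T.depth x - T.depth v = (T.depth x - T.depth w) + 1 by omega,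
    iterate_succ_apply', hx]
  exact (mem_filter.1 hw).2.2

theorem notMem_below {v w : V} (hw : w ∈ subChildren T v) : v ∉ T.below w := by
  have hdepth := T.depth_of_mem_subChildren hw
  rintro ⟨hle, -⟩
  omega

theorem disjoint_below {v w w' : V} (hw : w ∈ subChildren T v) (hw' : w' ∈ subChildren T v)
    (hne : w ≠ w') : Disjoint (T.below w) (T.below w') := by
  have hdepth := T.depth_of_mem_subChildren hw
  have hdepth' := T.depth_of_mem_subChildren hw'
  refine Set.disjoint_left.2 fun x ⟨_, hx⟩ ⟨_, hx'⟩ => hne ?_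
  rw [← hx, ← hx', hdepth, hdepth']

section Children

variable {v : V} {g : V → Finset V}

theorem pairwise_disjoint_of_mem_below
    (hg : ∀ w, ∀ x ∈ g w, w ∈ subChildren T v ∧ x ∈ T.below w) : Pairwise (Disjoint on g) :=
  fun w w' hne => disjoint_left.2 fun x hx hx' =>
    Set.disjoint_left.1 (disjoint_below (hg w x hx).1 (hg w' x hx').1 hne)
      (hg w x hx).2 (hg w' x hx').2

theorem notMem_biUnion_of_mem_below
    (hg : ∀ w, ∀ x ∈ g w, w ∈ subChildren T v ∧ x ∈ T.below w) : v ∉ univ.biUnion g := by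
  simp only [mem_biUnion, mem_univ, true_and, not_exists]
  exact fun w hv => notMem_below (hg w v hv).1 (hg w v hv).2

theorem insert_biUnion_subset_below
    (hg : ∀ w, ∀ x ∈ g w, w ∈ subChildren T v ∧ x ∈ T.below w) :
    ↑(insert v (univ.biUnion g)) ⊆ T.below v := by
  simp only [coe_insert, coe_biUnion, coe_univ, Set.mem_univ, Set.iUnion_true,
    Set.insert_subset_iff, Set.iUnion_subset_iff]
  exact ⟨T.mem_below_self v, fun w x hx => below_subset_below (hg w x hx).1 (hg w x hx).2⟩

end Children

theorem exists_isTreeSet_of_children (B a : V → ℕ) (v : V) (n : ℕ) (f : V → ℕ)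
    (D : V → Finset V)
    (hD : ∀ w ∈ subChildren T v, 0 < f w →
      IsTreeSet E n w (D w) ∧ ↑(D w) ⊆ T.below w ∧ (f w : ℤ) ≤ excess B a (D w)) :
    ∃ S, IsTreeSet E (n + 1) v S ∧ ↑S ⊆ T.below v ∧
      (a v : ℤ) + ∑ w ∈ subChildren T v, (f w : ℤ) - B v ≤ excess B a S := by
  classical
  set C := (subChildren T v).filter (0 < f ·)
  have hCD (w : V) (hw : w ∈ C) := hD w (mem_filter.1 hw).1 (mem_filter.1 hw).2
  set g : V → Finset V := fun w => if w ∈ C then D w else ∅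
  have hgC (w : V) (hw : g w ≠ ∅) : w ∈ C ∧ g w = D w := by
    by_cases h : w ∈ C
    · exact ⟨h, if_pos h⟩
    · exact absurd (if_neg h) hw
  have hg (w x : V) (hx : x ∈ g w) : w ∈ subChildren T v ∧ x ∈ T.below w := by
    obtain ⟨hwC, hgw⟩ := hgC w (ne_empty_of_mem hx)
    exact ⟨(mem_filter.1 hwC).1, (hCD w hwC).2.1 (hgw ▸ hx)⟩
  have hv := notMem_biUnion_of_mem_below hg
  refine ⟨_, .node g (fun w hw => ?_) (fun w hw => ?_) (pairwise_disjoint_of_mem_below hg) hv,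
    insert_biUnion_subset_below hg, ?_⟩
  · obtain ⟨hwS, hwu, rfl⟩ := mem_filter.1 (mem_filter.1 (hgC w hw).1).1
    exact T.edge w hwS hwu
  · obtain ⟨hwC, hgw⟩ := hgC w hw
    exact hgw ▸ (hCD w hwC).1
  calc (a v : ℤ) + ∑ w ∈ subChildren T v, (f w : ℤ) - B v
      = (a v - B v) + ∑ w ∈ C, (f w : ℤ) := by
        rw [sum_filter_of_ne fun w _ hw => Nat.pos_of_ne_zero (by exact_mod_cast hw)]
        ring
    _ ≤ (a v - B v) + ∑ w ∈ C, excess B a (g w) := by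
        gcongr with w hw
        rw [show g w = D w from if_pos hw]
        exact (hCD w hw).2.2
    _ = (a v - B v) + ∑ w, excess B a (g w) := by
        rw [sum_subset (subset_univ C) fun w _ hw => by simp [g, hw, excess]]
    _ = excess B a (insert v (univ.biUnion g)) := by
        rw [excess, sum_insert hv,
          sum_biUnion fun w _ w' _ hne => pairwise_disjoint_of_mem_below hg hne]
        rfl

theorem exists_isTreeSet_of_subForwardAux_pos (B a : V → ℕ) (n : ℕ) :
    ∀ v, 0 < subForwardAux T B a n v → ∃ S, IsTreeSet E (n + 1) v S ∧ ↑S ⊆ T.below v ∧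
      (subForwardAux T B a n v : ℤ) ≤ excess B a S := by
  induction n with
  | zero =>
    intro v hpos
    obtain ⟨S, hS, hsub, hle⟩ :=
      T.exists_isTreeSet_of_children B a v 0 0 (fun _ => ∅) (by simp)
    refine ⟨S, hS, hsub, ?_⟩
    simp only [subForwardAux] at hpos ⊢
    simp only [Pi.zero_apply, Nat.cast_zero, sum_const_zero, add_zero] at hle
    omega
  | succ n ih =>
    intro v hpos
    choose! D hD using ih
    obtain ⟨S, hS, hsub, hle⟩ :=
      T.exists_isTreeSet_of_children B a v (n + 1) _ D fun w _ hw => hD w hw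
    refine ⟨S, hS, hsub, ?_⟩
    simp only [subForwardAux] at hpos ⊢
    rw [← Nat.cast_sum] at hle
    omega

theorem exists_isTreeSet_of_le_rootLoad {B a : V → ℕ} (h : B u ≤ rootLoad T B a) :
    ∃ S, IsTreeSet E (Fintype.card V + 2) u S ∧ ∑ x ∈ S, B x ≤ ∑ x ∈ S, a x := by
  -- `subForward` runs `card V` rounds of the recursion, whence the height bound.
  choose! D hD using T.exists_isTreeSet_of_subForwardAux_pos B a (Fintype.card V)
  obtain ⟨S, hS, -, hle⟩ := T.exists_isTreeSet_of_children B a u (Fintype.card V + 1)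
    (subForward T B a) D fun w _ hw => hD w hw
  refine ⟨S, hS, ?_⟩
  have : (0 : ℤ) ≤ excess B a S := by
    unfold rootLoad at h
    rw [← Nat.cast_sum] at hle
    omega
  simpa [excess, sub_nonneg, ← Nat.cast_sum] using this

end RootedSubtree

theorem sq_div_exp_mul_mul_one_add_pow_le {ε : ℝ} (hε : ε ^ 2 ≤ 1) (d : ℕ) :
    ε ^ 2 / (Real.exp 1 * d) * (1 + ε ^ 2 / d) ^ d ≤ ε ^ 2 / d := by
  have hpow : (1 + ε ^ 2 / d) ^ d ≤ Real.exp 1 :=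
    calc (1 + ε ^ 2 / d) ^ d = (1 - -ε ^ 2 / d) ^ d := by ring
      _ ≤ Real.exp (- -ε ^ 2) :=
          Real.one_sub_div_pow_le_exp_neg (by nlinarith [d.cast_nonneg (α := ℝ)])
      _ ≤ Real.exp 1 := Real.exp_le_exp.2 (by rwa [neg_neg])
  calc ε ^ 2 / (Real.exp 1 * d) * (1 + ε ^ 2 / d) ^ d
      ≤ ε ^ 2 / (Real.exp 1 * d) * Real.exp 1 := by gcongr
    _ = ε ^ 2 / d := by
        rw [div_mul_eq_mul_div, mul_comm (Real.exp 1), mul_div_mul_right _ _ (Real.exp_pos 1).ne']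

theorem network_overload_prob_le_general
    {Ω : Type*} [MeasurableSpace Ω] (μ : Measure Ω)
    (E : V → V → Prop) (d : ℕ) (hd : 1 ≤ d)
    (hindeg : ∀ v : V, {w : V | E w v}.ncard ≤ d)
    (B : V → ℕ) (u : V) (ε : ℝ) (hε0 : 0 < ε) (hε : ε ≤ 1 / 2)
    (A : V → Ω → ℕ) (hAmeas : ∀ i, Measurable (A i))
    (hindep : iIndepFun A μ)
    (hmgf : ∀ i, ∫⁻ ω, ENNReal.ofReal (Real.exp (ε * ((A i ω : ℝ) - (B i : ℝ)))) ∂μ ≤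
      ENNReal.ofReal (ε ^ 2 / (Real.exp 1 * d))) :
    μ {ω | ∃ T : RootedSubtree V E u, B u ≤ rootLoad T B (fun i => A i ω)} ≤
      ENNReal.ofReal ε := by
  set q := ε ^ 2 / (Real.exp 1 * d)
  set c := ε ^ 2 / (d : ℝ)
  have hstep : ENNReal.ofReal q * (1 + ENNReal.ofReal c) ^ d ≤ ENNReal.ofReal c := by
    rw [← ENNReal.ofReal_one, ← ENNReal.ofReal_add zero_le_one (by positivity),
      ← ENNReal.ofReal_pow (by positivity), ← ENNReal.ofReal_mul (by positivity)]
    exact ENNReal.ofReal_le_ofReal (sq_div_exp_mul_mul_one_add_pow_le (by nlinarith) d)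
  have hcε : c ≤ ε := by
    rw [div_le_iff₀ (by positivity)]
    nlinarith [(Nat.one_le_cast (α := ℝ)).2 hd]
  calc μ {ω | ∃ T : RootedSubtree V E u, B u ≤ rootLoad T B (fun i => A i ω)}
      ≤ μ (⋃ S ∈ treeSets E (Fintype.card V + 2) u, {ω | ∑ i ∈ S, B i ≤ ∑ i ∈ S, A i ω}) :=
        measure_mono fun ω ⟨T, hT⟩ => by
          obtain ⟨S, hS, hle⟩ := T.exists_isTreeSet_of_le_rootLoad hT
          exact Set.mem_iUnion₂.2 ⟨S, mem_treeSets.2 hS, hle⟩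
    _ ≤ ∑ S ∈ treeSets E (Fintype.card V + 2) u, μ {ω | ∑ i ∈ S, B i ≤ ∑ i ∈ S, A i ω} :=
        measure_biUnion_finset_le _ _
    _ ≤ ∑ S ∈ treeSets E (Fintype.card V + 2) u, ENNReal.ofReal q ^ #S :=
        sum_le_sum fun S _ => measure_sum_le_sum_le_pow A hAmeas hindep B hε0.le _ hmgf S
    _ ≤ ENNReal.ofReal c := sum_treeSets_le zero_le zero_le hindeg hstep _ u
    _ ≤ ENNReal.ofReal ε := ENNReal.ofReal_le_ofReal hcε

/-- Let `(V, E)` be a finite directed graph in which every vertex has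
in-degree at most `d ≥ 1`, let `B` be capacities, `u ∈ V` and `ε ∈ (0, 1/2]`.  If
`(A_i)_{i ∈ V}` are mutually independent `ℕ`-valued random variables with
`E[exp(ε(A_i − B_i))] ≤ ε²/(e·d)` for every `i`, then the probability that some rooted
subtree `T` of `G` at `u` has `ℓ_u^T(A) ≥ B_u` is at most `ε`. -/
theorem network_overload_prob_le
    {Ω : Type*} [MeasurableSpace Ω] (μ : Measure Ω) [IsProbabilityMeasure μ]
    (E : V → V → Prop) (d : ℕ) (hd : 1 ≤ d)
    (hindeg : ∀ v : V, {w : V | E w v}.ncard ≤ d)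
    (B : V → ℕ) (u : V) (ε : ℝ) (hε0 : 0 < ε) (hε : ε ≤ 1 / 2)
    (A : V → Ω → ℕ) (hAmeas : ∀ i, Measurable (A i))
    (hindep : iIndepFun A μ)
    (hmgf : ∀ i, ∫⁻ ω, ENNReal.ofReal (Real.exp (ε * ((A i ω : ℝ) - (B i : ℝ)))) ∂μ ≤
      ENNReal.ofReal (ε ^ 2 / (Real.exp 1 * d))) :
    μ {ω | ∃ T : RootedSubtree V E u, B u ≤ rootLoad T B (fun i => A i ω)} ≤
      ENNReal.ofReal ε :=
  network_overload_prob_le_general μ E d hd hindeg B u ε hε0 hε A hAmeas hindep hmgf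
end

section
/- (Generalized decorrelation lemma.) Let n, N ≥ 1. For each k ∈ {1, …, N} let h_k : ℝⁿ → ℝ be a Borel measurable function that is nondecreasing in each coordinate (i.e., monotone with respect to the pointwise order on ℝⁿ). Let A_1, …, A_n be mutually independent real-valued random variables. For each i ∈ {1, …, n} let n_i ≥ 1 and let P_i : {1, …, N} → {1, …, n_i}. Let (A'_{i,s})_{1 ≤ i ≤ n, 1 ≤ s ≤ n_i} be a mutually independent family of random variables such that A'_{i,s} has the same distribution as A_i for every i, s. Then max_{1 ≤ k ≤ N} h_k(A'_{1,P_1(k)}, …, A'_{n,P_n(k)}) stochastically dominates max_{1 ≤ k ≤ N} h_k(A_1, …, A_n); that is, for every a ∈ ℝ, P(max_k h_k(A'_{1,P_1(k)}, …, A'_{n,P_n(k)}) ≤ a) ≤ P(max_k h_k(A_1, …, A_n) ≤ a). -/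
/-!
Write `S k = {y | h k y ≤ a}`; these are lower sets, and by independence both probabilities are
values of product measures: `⨂ᵢ μᵢ^{⊗ mᵢ}` at `{x | ∀ k, (xᵢ (Pᵢ k))ᵢ ∈ S k}` on the left and
`⨂ᵢ μᵢ` at `⋂ₖ S k` on the right, where `μᵢ` is the law of `Aᵢ`. These are compared by induction
on the number of coordinates, splitting off the first one with Fubini. Once the other coordinates
are frozen, the constraints on the copies of the first coordinate are lower sets of `ℝ`, hence
nested. Grouping them by the copy they constrain, the probability becomes a product of
probabilities of nested sets, which is at most the probability of the smallest of them, that is,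
of the intersection of all the constraints.
-/

open MeasureTheory ProbabilityTheory Set

namespace Fin

variable {n : ℕ} {α : Fin (n + 1) → Type*}

@[fun_prop]
theorem _root_.Measurable.finInsertNth [∀ i, MeasurableSpace (α i)] {γ : Type*}
    [MeasurableSpace γ] (i : Fin (n + 1)) {f : γ → α i} {g : γ → ∀ j, α (i.succAbove j)}
    (hf : Measurable f) (hg : Measurable g) : Measurable fun x ↦ insertNth i (f x) (g x) :=
  (MeasurableEquiv.piFinSuccAbove α i).symm.measurable.comp (hf.prodMk hg)

theorem insertNth_mono [∀ i, Preorder (α i)] (i : Fin (n + 1)) {x y : α i}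
    {p q : ∀ j, α (i.succAbove j)} (hxy : x ≤ y) (hpq : p ≤ q) :
    insertNth i x p ≤ insertNth i y q := by
  simpa [insertNth_le_iff] using ⟨hxy, hpq⟩

theorem insertNth_apply_comp {β : Fin (n + 1) → Type*} (i : Fin (n + 1))
    (f : ∀ j, α j → β j) (x : α i) (p : ∀ j, α (i.succAbove j)) :
    (fun j ↦ f j (insertNth i x p j)) = insertNth i (f i x) fun j ↦ f _ (p j) := by
  funext j
  induction j using i.succAboveCases <;> simp

end Fin

namespace MeasureTheory.Measure

variable {α α' β β' : Type*} [MeasurableSpace α] [MeasurableSpace α'] [MeasurableSpace β]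
  [MeasurableSpace β']

theorem prod_apply_le_of_preimage_prodMk_right_le {μ : Measure α} {μ' : Measure α'} [SFinite μ]
    [SFinite μ'] {ν : Measure β} [SFinite ν] {s : Set (α × β)} {t : Set (α' × β)}
    (hs : MeasurableSet s) (ht : MeasurableSet t)
    (h : ∀ y, μ ((·, y) ⁻¹' s) ≤ μ' ((·, y) ⁻¹' t)) : μ.prod ν s ≤ μ'.prod ν t := by
  rw [prod_apply_symm hs, prod_apply_symm ht]
  exact lintegral_mono h

theorem prod_apply_le_of_preimage_prodMk_left_le {μ : Measure α} {ν : Measure β}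
    {ν' : Measure β'} [SFinite ν] [SFinite ν'] {s : Set (α × β)} {t : Set (α × β')}
    (hs : MeasurableSet s) (ht : MeasurableSet t)
    (h : ∀ x, ν (Prod.mk x ⁻¹' s) ≤ ν' (Prod.mk x ⁻¹' t)) : μ.prod ν s ≤ μ.prod ν' t := by
  rw [prod_apply hs, prod_apply ht]
  exact lintegral_mono h

end MeasureTheory.Measure

theorem measure_pi_univ_pi_le_measure_iInter {α ι : Type*} [MeasurableSpace α] [Fintype ι]
    (μ : Measure α) [IsProbabilityMeasure μ] {M : ι → Set α}
    (hM : ∀ s t, M s ⊆ M t ∨ M t ⊆ M s) :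
    Measure.pi (fun _ ↦ μ) (univ.pi M) ≤ μ (⋂ s, M s) := by
  rcases isEmpty_or_nonempty ι with hι | hι
  · simp
  have hdir : Directed (· ⊇ ·) M := fun s t ↦ by
    rcases hM s t with hst | hts
    exacts [⟨s, subset_rfl, hst⟩, ⟨t, hts, subset_rfl⟩]
  obtain ⟨s₀, hs₀⟩ := hdir.finite_le id
  calc Measure.pi (fun _ ↦ μ) (univ.pi M) = ∏ s, μ (M s) := Measure.pi_pi _ M
    _ ≤ ∏ s ∈ {s₀}, μ (M s) :=
      Finset.prod_le_prod_of_subset_of_le_one' (by simp) fun _ _ _ ↦ prob_le_one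
    _ ≤ μ (⋂ s, M s) := by simpa using measure_mono (subset_iInter hs₀)

theorem measure_pi_setOf_forall_apply_mem_le {α ι κ : Type*} [MeasurableSpace α] [LinearOrder α]
    [Fintype ι] (μ : Measure α) [IsProbabilityMeasure μ] (Q : κ → ι) {I : κ → Set α}
    (hI : ∀ k, IsLowerSet (I k)) :
    Measure.pi (fun _ ↦ μ) {z | ∀ k, z (Q k) ∈ I k} ≤ μ (⋂ k, I k) := by
  let M s := ⋂ (k) (_ : Q k = s), I k
  have hM (s) : IsLowerSet (M s) := isLowerSet_iInter₂ fun k _ ↦ hI k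
  have hpi : {z | ∀ k, z (Q k) ∈ I k} = univ.pi M := by
    ext z; simp only [mem_ofPred_eq, mem_univ_pi, mem_iInter, M]
    exact ⟨fun h _ k hk ↦ hk ▸ h k, fun h k ↦ h _ k rfl⟩
  have hinter : ⋂ k, I k = ⋂ s, M s := by
    ext c; simp only [mem_iInter, M]
    exact ⟨fun h _ k _ ↦ h k, fun h k ↦ h _ k rfl⟩
  rw [hpi, hinter]
  exact measure_pi_univ_pi_le_measure_iInter μ fun s t ↦ (hM s).total (hM t)

theorem measure_prod_setOf_forall_apply_mem_le {α β ι κ : Type*} [MeasurableSpace α]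
    [LinearOrder α] [MeasurableSpace β] [Fintype ι] [Countable κ] (μ : Measure α)
    [IsProbabilityMeasure μ] (ν : Measure β) [SFinite ν] (Q : κ → ι) {R : κ → Set (α × β)}
    (hR : ∀ k, MeasurableSet (R k)) (hRl : ∀ k y, IsLowerSet ((·, y) ⁻¹' R k)) :
    ((Measure.pi fun _ : ι ↦ μ).prod ν) {q | ∀ k, (q.1 (Q k), q.2) ∈ R k} ≤
      (μ.prod ν) (⋂ k, R k) := by
  have hmeas : MeasurableSet {q : (ι → α) × β | ∀ k, (q.1 (Q k), q.2) ∈ R k} := by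
    simp only [ofPred_forall]
    exact .iInter fun k ↦ hR k |>.preimage (by fun_prop)
  refine Measure.prod_apply_le_of_preimage_prodMk_right_le hmeas (.iInter hR) fun y ↦ ?_
  simpa [preimage_iInter] using measure_pi_setOf_forall_apply_mem_le μ Q (hRl · y)

theorem measurableSet_setOf_forall_apply_apply_mem {ι κ : Type*} {β : ι → Type*}
    {α : ι → Type*} [∀ i, MeasurableSpace (α i)] [Countable κ] (P : ∀ i, κ → β i)
    {S : κ → Set (∀ i, α i)} (hS : ∀ k, MeasurableSet (S k)) :
    MeasurableSet {x : ∀ i, β i → α i | ∀ k, (fun i ↦ x i (P i k)) ∈ S k} := by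
  simp only [ofPred_forall]
  exact .iInter fun k ↦ hS k |>.preimage (by fun_prop)

universe u v

theorem measure_pi_pi_setOf_forall_mem_le {κ : Type*} [Countable κ] :
    ∀ {n : ℕ} {α : Fin n → Type u} [∀ i, MeasurableSpace (α i)] [∀ i, LinearOrder (α i)]
      {ι : Fin n → Type v} [∀ i, Fintype (ι i)] (μ : ∀ i, Measure (α i))
      [∀ i, IsProbabilityMeasure (μ i)] {S : κ → Set (∀ i, α i)},
      (∀ k, MeasurableSet (S k)) → (∀ k, IsLowerSet (S k)) → ∀ P : ∀ i, κ → ι i,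
      Measure.pi (fun i ↦ Measure.pi fun _ : ι i ↦ μ i) {x | ∀ k, (fun i ↦ x i (P i k)) ∈ S k} ≤
        Measure.pi μ (⋂ k, S k)
  | 0, α, _, _, ι, _, μ, _, S, _, _, P => by
    by_cases hne : (⋂ k, S k).Nonempty
    · rw [hne.eq_univ, measure_univ]
      exact prob_le_one
    · have hempty : {x : ∀ i, ι i → α i | ∀ k, (fun i ↦ x i (P i k)) ∈ S k} = ∅ :=
        eq_empty_of_forall_notMem fun x hx ↦ hne
          ⟨_, mem_iInter.2 fun k ↦ Subsingleton.elim (fun i ↦ x i (P i k)) finZeroElim ▸ hx k⟩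
      simp [hempty]
  | n + 1, α, _, _, ι, _, μ, _, S, hS, hSl, P => by
    have he := measurePreserving_piFinSuccAbove μ 0
    have he' := measurePreserving_piFinSuccAbove (fun i ↦ Measure.pi fun _ : ι i ↦ μ i) 0
    let R k : Set (α 0 × ∀ j, ι (Fin.succAbove 0 j) → α (Fin.succAbove 0 j)) :=
      {q | Fin.insertNth 0 q.1 (fun j ↦ q.2 j (P _ k)) ∈ S k}
    have hL := measurableSet_setOf_forall_apply_apply_mem P hS
    have hR k : MeasurableSet (R k) := hS k |>.preimage (by fun_prop)
    calc _ = ((Measure.pi fun _ ↦ μ 0).prod (Measure.pi fun j ↦ Measure.pi fun _ ↦ μ _))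
            ((MeasurableEquiv.piFinSuccAbove (fun i ↦ ι i → α i) 0).symm ⁻¹'
              {x | ∀ k, (fun i ↦ x i (P i k)) ∈ S k}) :=
          (he'.symm.measure_preimage hL.nullMeasurableSet).symm
      _ = ((Measure.pi fun _ ↦ μ 0).prod (Measure.pi fun j ↦ Measure.pi fun _ ↦ μ _))
            {q | ∀ k, (q.1 (P 0 k), q.2) ∈ R k} := by
        congr 1
        ext q
        exact forall_congr' fun k ↦ iff_of_eq <| congrArg (· ∈ S k) <|
          Fin.insertNth_apply_comp 0 (fun i (x : ι i → α i) ↦ x (P i k)) q.1 q.2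
      _ ≤ ((μ 0).prod _) (⋂ k, R k) :=
        measure_prod_setOf_forall_apply_mem_le (μ 0) _ (P 0) hR
          fun k _ ↦ (hSl k).preimage fun _ _ hc ↦ Fin.insertNth_mono 0 hc le_rfl
      _ ≤ ((μ 0).prod (Measure.pi fun j ↦ μ (Fin.succAbove 0 j)))
            ((MeasurableEquiv.piFinSuccAbove α 0).symm ⁻¹' ⋂ k, S k) := by
        refine Measure.prod_apply_le_of_preimage_prodMk_left_le (.iInter hR)
          (MeasurableSet.iInter hS |>.preimage (MeasurableEquiv.measurable _)) fun c ↦ ?_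
        have ih := measure_pi_pi_setOf_forall_mem_le (fun j ↦ μ (Fin.succAbove 0 j))
          (S := fun k ↦ Fin.insertNth 0 c ⁻¹' S k)
          (fun k ↦ hS k |>.preimage (by fun_prop))
          (fun k ↦ (hSl k).preimage fun _ _ hy ↦ Fin.insertNth_mono 0 le_rfl hy)
          (fun j ↦ P (Fin.succAbove 0 j))
        convert ih using 2
        · ext
          simp only [preimage_iInter, mem_iInter]
          rfl
        · simp only [preimage_iInter]
          rfl
      _ = Measure.pi μ (⋂ k, S k) :=
        he.symm.measure_preimage (MeasurableSet.iInter hS).nullMeasurableSet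

theorem ProbabilityTheory.iIndepFun.map_fun_fun_eq_pi_pi_map {Ω ι : Type*} [MeasurableSpace Ω]
    {μ : Measure Ω} [Fintype ι] {κ : ι → Type*} [∀ i, Fintype (κ i)] {X : ∀ i, κ i → Type*}
    [∀ i j, MeasurableSpace (X i j)] {f : ∀ i j, Ω → X i j} (hf : ∀ i j, Measurable (f i j))
    (hind : iIndepFun (fun p : Σ i, κ i ↦ f p.1 p.2) μ) :
    μ.map (fun ω i j ↦ f i j ω) = Measure.pi fun i ↦ Measure.pi fun j ↦ μ.map (f i j) := by
  have := hind.isProbabilityMeasure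
  have : ∀ i j, IsProbabilityMeasure (μ.map (f i j)) :=
    fun i j ↦ Measure.isProbabilityMeasure_map (hf i j).aemeasurable
  have hcurry : (fun ω i j ↦ f i j ω) = MeasurableEquiv.piCurry X ∘ fun ω p ↦ f p.1 p.2 ω := rfl
  rw [hcurry, ← Measure.map_map (by fun_prop) (by fun_prop),
    hind.map_fun_eq_pi_map fun p ↦ (hf p.1 p.2).aemeasurable, ← Measure.infinitePi_eq_pi,
    Measure.infinitePi_map_piCurry (fun i j ↦ μ.map (f i j))]
  simp only [Measure.infinitePi_eq_pi]

theorem decorrelation_max_general_general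
    {Ω : Type*} [MeasurableSpace Ω] (μ : Measure Ω) [IsProbabilityMeasure μ]
    (n N : ℕ) (hN : 1 ≤ N)
    (h : Fin N → (Fin n → ℝ) → ℝ) (hmeas : ∀ k, Measurable (h k))
    (hmono : ∀ k, Monotone (h k))
    (A : Fin n → Ω → ℝ) (hAmeas : ∀ i, Measurable (A i))
    (hAindep : iIndepFun A μ)
    (m : Fin n → ℕ)
    (P : (i : Fin n) → Fin N → Fin (m i))
    (A' : (i : Fin n) → Fin (m i) → Ω → ℝ)
    (hA'meas : ∀ i s, Measurable (A' i s))
    (hA'indep : iIndepFun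
      (fun p : (Σ i : Fin n, Fin (m i)) => A' p.1 p.2) μ)
    (hA'ident : ∀ i s, IdentDistrib (A' i s) (A i) μ μ) (a : ℝ) :
    μ {ω | (⨆ k : Fin N, h k (fun i => A' i (P i k) ω)) ≤ a} ≤
      μ {ω | (⨆ k : Fin N, h k (fun i => A i ω)) ≤ a} := by
  have : Nonempty (Fin N) := ⟨⟨0, hN⟩⟩
  have : ∀ i, IsProbabilityMeasure (μ.map (A i)) :=
    fun i ↦ Measure.isProbabilityMeasure_map (hAmeas i).aemeasurable
  have hsup (g : Fin N → ℝ) : (⨆ k, g k) ≤ a ↔ ∀ k, g k ≤ a :=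
    ciSup_le_iff (Finite.bddAbove_range g)
  let S k := h k ⁻¹' Iic a
  have hS k : MeasurableSet (S k) := measurableSet_Iic.preimage (hmeas k)
  have hSl k : IsLowerSet (S k) := isLowerSet_Iic a |>.preimage (hmono k)
  have hdecoupled :
      μ.map (fun ω i s ↦ A' i s ω) = Measure.pi fun i ↦ Measure.pi fun _ ↦ μ.map (A i) := by
    rw [hA'indep.map_fun_fun_eq_pi_pi_map hA'meas]
    simp_rw [fun i s ↦ (hA'ident i s).map_eq]
  calc μ {ω | (⨆ k, h k (fun i ↦ A' i (P i k) ω)) ≤ a}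
      = μ.map (fun ω i s ↦ A' i s ω) {x | ∀ k, (fun i ↦ x i (P i k)) ∈ S k} := by
        rw [Measure.map_apply (by fun_prop) (measurableSet_setOf_forall_apply_apply_mem P hS)]
        simp [hsup, S]
    _ ≤ Measure.pi (fun i ↦ μ.map (A i)) (⋂ k, S k) := by
        rw [hdecoupled]
        exact measure_pi_pi_setOf_forall_mem_le _ hS hSl P
    _ = μ {ω | (⨆ k, h k (fun i ↦ A i ω)) ≤ a} := by
        rw [← hAindep.map_fun_eq_pi_map fun i ↦ (hAmeas i).aemeasurable,
          Measure.map_apply (by fun_prop) (.iInter hS)]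
        congr 1
        ext ω
        simp [hsup, S]

/-- **Generalized decorrelation lemma.**
For Borel measurable functions `h_k : ℝⁿ → ℝ` (`1 ≤ k ≤ N`) nondecreasing in each
coordinate, mutually independent real random variables `A_1, …, A_n`, index maps
`P_i : [N] → [n_i]`, and a mutually independent family `A'_{i,s}` with `A'_{i,s}`
distributed as `A_i`, the random variable `max_k h_k(A'_{1,P_1(k)}, …, A'_{n,P_n(k)})`
stochastically dominates `max_k h_k(A_1, …, A_n)`. -/
theorem decorrelation_max_general
    {Ω : Type*} [MeasurableSpace Ω] (μ : Measure Ω) [IsProbabilityMeasure μ]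
    (n N : ℕ) (hn : 1 ≤ n) (hN : 1 ≤ N)
    (h : Fin N → (Fin n → ℝ) → ℝ) (hmeas : ∀ k, Measurable (h k))
    (hmono : ∀ k, Monotone (h k))
    (A : Fin n → Ω → ℝ) (hAmeas : ∀ i, Measurable (A i))
    (hAindep : iIndepFun A μ)
    (m : Fin n → ℕ) (hm : ∀ i, 1 ≤ m i)
    (P : (i : Fin n) → Fin N → Fin (m i))
    (A' : (i : Fin n) → Fin (m i) → Ω → ℝ)
    (hA'meas : ∀ i s, Measurable (A' i s))
    (hA'indep : iIndepFun
      (fun p : (Σ i : Fin n, Fin (m i)) => A' p.1 p.2) μ)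
    (hA'ident : ∀ i s, IdentDistrib (A' i s) (A i) μ μ) (a : ℝ) :
    μ {ω | (⨆ k : Fin N, h k (fun i => A' i (P i k) ω)) ≤ a} ≤
      μ {ω | (⨆ k : Fin N, h k (fun i => A i ω)) ≤ a} :=
  decorrelation_max_general_general μ n N hN h hmeas hmono A hAmeas hAindep m P A' hA'meas hA'indep
    hA'ident a
end

section
/- Let G = (V, E) be a finite directed graph, u ∈ V, and B : V → ℕ. Let (A_i)_{i ∈ V} be mutually independent ℕ-valued random variables. For each i ∈ V and each directed simple path P from i to u in G, let A_{i,P} be a random variable distributed as A_i, with the whole family (A_{i,P})_{i,P} mutually independent. For a rooted subtree T of G at u containing i, let P_i(T) denote the unique directed path from i to u along the edges of T. Then max over rooted subtrees T of G at u of ℓ_u^T((A_{i,P_i(T)})_{i ∈ T}) stochastically dominates max over rooted subtrees T of G at u of ℓ_u^T((A_i)_{i ∈ T}); that is, for every a ∈ ℝ, P(max_T ℓ_u^T((A_{i,P_i(T)})_i) ≤ a) ≤ P(max_T ℓ_u^T((A_i)_i) ≤ a). -/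
/-!
Only two features of the loads matter: the load of a tree is monotone in the arrivals, and a
tree reads exactly one copy `A_{i,P}` of each arrival. The event that all loads are at most `a`
is therefore an intersection of lower sets. Replacing one copy label `P` at `i` by a reference
label everywhere couples two i.i.d. coordinates, one read by some trees and the other by the
rest; given all other coordinates this turns `ν(F) ν(G)` into `ν(F ∩ G)`, which is larger
because lower sets of `ℕ` are nested. Merging labels one at a time reaches the labelling in
which all trees read the same copy of each arrival, and that family has the law of `A`.
-/

open MeasureTheory ProbabilityTheory

variable {V : Type*} [Fintype V] [DecidableEq V]

/-- A directed simple path from `i` to `u` in the graph `(V, E)`: a nonempty duplicate-free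
list of vertices starting at `i`, ending at `u`, and following edges of `E`. -/
structure SimplePath (V : Type*) (E : V → V → Prop) (i u : V) where
  verts : List V
  ne : verts ≠ []
  head_eq : verts.head ne = i
  last_eq : verts.getLast ne = u
  chain : verts.Chain' E
  nodup : verts.Nodup

/-- The list of vertices obtained by following `nxt` from `v` until reaching `u`
(with fuel `n`). -/
def followAux (nxt : V → V) (u : V) : ℕ → V → List V
  | 0, v => [v]
  | n + 1, v => if v = u then [v] else v :: followAux nxt u n (nxt v)

/-- The vertex list of the unique directed path from `i` to the root `u` along the edges
of the rooted subtree `T`. -/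
def treePathVerts {E : V → V → Prop} {u : V} (T : RootedSubtree V E u) (i : V) : List V :=
  followAux T.nxt u (Fintype.card V) i

open Function
open scoped ENNReal

theorem IsLowerSet.measure_mul_measure_le_measure_inter {α : Type*} [LinearOrder α]
    [MeasurableSpace α] (μ : Measure α) [IsZeroOrProbabilityMeasure μ] {s t : Set α}
    (hs : IsLowerSet s) (ht : IsLowerSet t) : μ s * μ t ≤ μ (s ∩ t) := by
  rcases hs.total ht with hst | hts
  · rw [Set.inter_eq_left.2 hst]
    exact mul_le_of_le_one_right' prob_le_one
  · rw [Set.inter_eq_right.2 hts]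
    exact mul_le_of_le_one_left' prob_le_one

/-- With the other coordinates frozen, `F` reads only coordinate `j'` and `G` only `j`, so the
left side integrates `ν(Fₓ) ν(Gₓ)` and the right side `ν(Fₓ ∩ Gₓ)`. -/
theorem MeasureTheory.Measure.pi_inter_le_pi_preimage_update {ι : Type*} [Fintype ι]
    [DecidableEq ι] (ν : ι → Measure ℕ) [∀ i, IsProbabilityMeasure (ν i)] {j j' : ι}
    (hjj' : j ≠ j') (hν : ν j' = ν j) {F G : Set (ι → ℕ)} (hF : IsLowerSet F)
    (hG : IsLowerSet G) (hFj : ∀ x s, update x j s ∈ F ↔ x ∈ F)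
    (hGj' : ∀ x s, update x j' s ∈ G ↔ x ∈ G) :
    Measure.pi ν (F ∩ G) ≤ Measure.pi ν ((fun x => update x j' (x j)) ⁻¹' (F ∩ G)) := by
  classical
  simp only [← lintegral_indicator_one MeasurableSet.of_discrete]
  refine lintegral_le_of_lmarginal_le {j, j'} .of_discrete .of_discrete fun x => ?_
  set Fx := update x j' ⁻¹' F
  set Gx := update x j ⁻¹' G
  have hL : ∀ s t, (F ∩ G).indicator 1 (update (update x j s) j' t) =
      Gx.indicator (1 : ℕ → ℝ≥0∞) s * Fx.indicator 1 t := by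
    intro s t
    have hF' : update (update x j s) j' t ∈ F ↔ t ∈ Fx := by rw [update_comm hjj', hFj]; rfl
    have hG' : update (update x j s) j' t ∈ G ↔ s ∈ Gx := hGj' _ _
    simp [Set.indicator_apply, hF', hG', ite_and]
  have hR : ∀ s t, ((fun x => update x j' (x j)) ⁻¹' (F ∩ G)).indicator 1
      (update (update x j s) j' t) = (Gx ∩ Fx).indicator (1 : ℕ → ℝ≥0∞) s := by
    intro s t
    have hy : update (update (update x j s) j' t) j' (update (update x j s) j' t j) =
        update (update x j s) j' s := by rw [update_idem, update_of_ne hjj', update_self]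
    have hF' : update (update x j s) j' s ∈ F ↔ s ∈ Fx := by rw [update_comm hjj', hFj]; rfl
    have hG' : update (update x j s) j' s ∈ G ↔ s ∈ Gx := hGj' _ _
    simp [Set.indicator_apply, hy, hF', hG', and_comm]
  rw [lmarginal_insert _ .of_discrete (by simpa using hjj'),
    lmarginal_insert _ .of_discrete (by simpa using hjj')]
  simp only [lmarginal_singleton, hL, hR, lintegral_const, measure_univ, mul_one,
    lintegral_const_mul _ .of_discrete, lintegral_mul_const _ .of_discrete,
    lintegral_indicator_one MeasurableSet.of_discrete, hν]
  exact IsLowerSet.measure_mul_measure_le_measure_inter (ν j) (hG.preimage (update_mono (f := x)))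
    (hF.preimage (update_mono (f := x)))

section Labelling

variable {κ τ : Type*} {β : κ → Type*}

/-- `x ⟨i, b⟩` is copy `b` of the `i`-th variable, and `c t` picks the copies that the
constraint `Φ t` reads. -/
def labelledEvent (Φ : τ → Set (κ → ℕ)) (c : τ → (i : κ) → β i) : Set ((Σ i, β i) → ℕ) :=
  {x | ∀ t, (fun i => x ⟨i, c t i⟩) ∈ Φ t}

def relabel [DecidableEq (Σ i, β i)] (S : Finset (Σ i, β i)) (r : (i : κ) → β i)
    (c : τ → (i : κ) → β i) : τ → (i : κ) → β i :=
  fun t i => if ⟨i, c t i⟩ ∈ S then r i else c t i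

theorem isLowerSet_labelledEvent {Φ : τ → Set (κ → ℕ)} (hΦ : ∀ t, IsLowerSet (Φ t))
    (c : τ → (i : κ) → β i) : IsLowerSet (labelledEvent Φ c) :=
  fun _ _ hyx hx t => hΦ t (fun _ => hyx _) (hx t)

theorem sigma_mk_ne_of_apply_ne {c : (i : κ) → β i} {i₀ : κ} {b : β i₀} (h : c i₀ ≠ b)
    (i : κ) : (⟨i, c i⟩ : Σ i, β i) ≠ ⟨i₀, b⟩ := by
  intro hi
  obtain rfl : i = i₀ := congrArg Sigma.fst hi
  exact h (sigma_mk_injective hi)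

theorem update_mem_labelledEvent_iff [DecidableEq (Σ i, β i)]
    {Φ : τ → Set (κ → ℕ)} {c : τ → (i : κ) → β i} {i₀ : κ} {b : β i₀} (h : ∀ t, c t i₀ ≠ b)
    (x : (Σ i, β i) → ℕ) (s : ℕ) :
    update x ⟨i₀, b⟩ s ∈ labelledEvent Φ c ↔ x ∈ labelledEvent Φ c := by
  simp only [labelledEvent, Set.mem_ofPred_eq,
    update_of_ne (sigma_mk_ne_of_apply_ne (h _) _)]

theorem labelledEvent_relabel_singleton [DecidableEq (Σ i, β i)]
    (Φ : τ → Set (κ → ℕ)) (c : τ → (i : κ) → β i) (r : (i : κ) → β i) (i₀ : κ) (b : β i₀) :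
    labelledEvent Φ (relabel {⟨i₀, b⟩} r c) =
      (fun x => update x ⟨i₀, b⟩ (x ⟨i₀, r i₀⟩)) ⁻¹' labelledEvent Φ c := by
  ext x
  refine forall_congr' fun t => Eq.to_iff (congrArg (· ∈ Φ t) (funext fun i => ?_))
  by_cases h : (⟨i, c t i⟩ : Σ i, β i) = ⟨i₀, b⟩
  · obtain rfl : i = i₀ := congrArg Sigma.fst h
    simp [relabel, h]
  · simp [relabel, h]

theorem pi_labelledEvent_le_relabel_singleton [Fintype κ] [∀ i, Fintype (β i)]
    [DecidableEq (Σ i, β i)] (ν : κ → Measure ℕ)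
    [∀ i, IsProbabilityMeasure (ν i)] {Φ : τ → Set (κ → ℕ)} (hΦ : ∀ t, IsLowerSet (Φ t))
    (c : τ → (i : κ) → β i) (r : (i : κ) → β i) (q : Σ i, β i) :
    Measure.pi (fun p : Σ i, β i => ν p.1) (labelledEvent Φ c) ≤
      Measure.pi (fun p : Σ i, β i => ν p.1) (labelledEvent Φ (relabel {q} r c)) := by
  obtain ⟨i₀, b⟩ := q
  rw [labelledEvent_relabel_singleton]
  by_cases hb : b = r i₀
  · subst hb
    simp [update_eq_self]
  set F := labelledEvent (fun t : {t // c t i₀ = b} => Φ t) (fun t => c t)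
  set G := labelledEvent (fun t : {t // c t i₀ ≠ b} => Φ t) (fun t => c t)
  have hFG : labelledEvent Φ c = F ∩ G := by
    ext x
    exact ⟨fun hx => ⟨fun t => hx t, fun t => hx t⟩,
      fun hx t => (em (c t i₀ = b)).elim (fun ht => hx.1 ⟨t, ht⟩) fun ht => hx.2 ⟨t, ht⟩⟩
  rw [hFG]
  refine Measure.pi_inter_le_pi_preimage_update _ (fun h => hb (sigma_mk_injective h).symm) rfl
    (isLowerSet_labelledEvent (fun _ => hΦ _) _) (isLowerSet_labelledEvent (fun _ => hΦ _) _)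
    (update_mem_labelledEvent_iff fun t => t.2.trans_ne hb)
    (update_mem_labelledEvent_iff fun t => t.2)

theorem relabel_empty [DecidableEq (Σ i, β i)] (r : (i : κ) → β i) (c : τ → (i : κ) → β i) :
    relabel ∅ r c = c := by
  funext t i
  simp [relabel]

theorem relabel_univ [Fintype κ] [∀ i, Fintype (β i)] [DecidableEq (Σ i, β i)]
    (r : (i : κ) → β i) (c : τ → (i : κ) → β i) : relabel Finset.univ r c = fun _ => r := by
  funext t i
  simp [relabel]

theorem relabel_insert [DecidableEq (Σ i, β i)] (q : Σ i, β i) (S : Finset (Σ i, β i))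
    (r : (i : κ) → β i) (c : τ → (i : κ) → β i) :
    relabel (insert q S) r c = relabel {q} r (relabel S r c) := by
  funext t i
  by_cases hS : (⟨i, c t i⟩ : Σ i, β i) ∈ S <;> simp [relabel, hS]

theorem pi_labelledEvent_le_relabel [Fintype κ] [∀ i, Fintype (β i)]
    [DecidableEq (Σ i, β i)] (ν : κ → Measure ℕ) [∀ i, IsProbabilityMeasure (ν i)]
    {Φ : τ → Set (κ → ℕ)} (hΦ : ∀ t, IsLowerSet (Φ t)) (c : τ → (i : κ) → β i)
    (r : (i : κ) → β i) (S : Finset (Σ i, β i)) :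
    Measure.pi (fun p : Σ i, β i => ν p.1) (labelledEvent Φ c) ≤
      Measure.pi (fun p : Σ i, β i => ν p.1) (labelledEvent Φ (relabel S r c)) := by
  induction S using Finset.induction_on with
  | empty => rw [relabel_empty]
  | insert q S _ ih =>
    rw [relabel_insert]
    exact ih.trans (pi_labelledEvent_le_relabel_singleton ν hΦ _ r q)

theorem measure_labelledEvent_le [Fintype κ] [∀ i, Fintype (β i)] {Ω : Type*}
    [MeasurableSpace Ω] {μ : Measure Ω} {X : κ → Ω → ℕ} {Y : (Σ i, β i) → Ω → ℕ}
    (hX : iIndepFun X μ) (hY : iIndepFun Y μ) (hYX : ∀ p, IdentDistrib (Y p) (X p.1) μ μ)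
    {Φ : τ → Set (κ → ℕ)} (hΦ : ∀ t, IsLowerSet (Φ t)) (c : τ → (i : κ) → β i) :
    μ {ω | ∀ t, (fun i => Y ⟨i, c t i⟩ ω) ∈ Φ t} ≤ μ {ω | ∀ t, (fun i => X i ω) ∈ Φ t} := by
  classical
  rcases isEmpty_or_nonempty τ with hτ | ⟨⟨t₀⟩⟩
  · simp
  -- `c t₀` supplies the reference labels and shows that every `X i` has a copy.
  have := hX.isProbabilityMeasure
  have hYm : ∀ p, AEMeasurable (Y p) μ := fun p => (hYX p).aemeasurable_fst
  have : ∀ i, IsProbabilityMeasure (μ.map (X i)) :=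
    fun i => Measure.isProbabilityMeasure_map (hYX ⟨i, c t₀ i⟩).aemeasurable_snd
  have hlaw : ∀ c' : τ → (i : κ) → β i, μ {ω | ∀ t, (fun i => Y ⟨i, c' t i⟩ ω) ∈ Φ t} =
      Measure.pi (fun p : Σ i, β i => μ.map (X p.1)) (labelledEvent Φ c') := by
    intro c'
    rw [← funext fun p => (hYX p).map_eq, ← hY.map_fun_eq_pi_map hYm,
      Measure.map_apply_of_aemeasurable (aemeasurable_pi_lambda _ hYm) .of_discrete]
    rfl
  calc μ {ω | ∀ t, (fun i => Y ⟨i, c t i⟩ ω) ∈ Φ t}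
      ≤ μ {ω | ∀ t, (fun i => Y ⟨i, c t₀ i⟩ ω) ∈ Φ t} := by
        simpa only [hlaw, relabel_univ] using
          pi_labelledEvent_le_relabel (fun i => μ.map (X i)) hΦ c (c t₀) Finset.univ
    _ = μ {ω | ∀ t, (fun i => X i ω) ∈ Φ t} :=
        (IdentDistrib.pi (fun i => hYX ⟨i, c t₀ i⟩)
          (hY.precomp fun i j h => congrArg Sigma.fst h) hX).measure_mem_eq
          (s := {x | ∀ t, x ∈ Φ t}) .of_discrete

end Labelling

noncomputable instance (E : V → V → Prop) (i u : V) : Fintype (SimplePath V E i u) :=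
  Fintype.ofInjective (fun P => (⟨P.verts, P.nodup⟩ : {l : List V // l.Nodup})) fun P Q h => by
    cases P; cases Q; cases congrArg Subtype.val h; rfl

section Monotone

variable {E : V → V → Prop} {u : V}

theorem subForwardAux_mono (T : RootedSubtree V E u) (B : V → ℕ) (n : ℕ) (v : V) :
    Monotone fun a => subForwardAux T B a n v := by
  induction n generalizing v with
  | zero => exact fun _ _ h => Nat.sub_le_sub_right (h v) _
  | succ n ih =>
    exact fun _ _ h =>
      Nat.sub_le_sub_right (add_le_add (h v) (Finset.sum_le_sum fun w _ => ih w h)) _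

theorem rootLoad_mono (T : RootedSubtree V E u) (B : V → ℕ) : Monotone (rootLoad T B) :=
  fun _ _ h => add_le_add (h u) (Finset.sum_le_sum fun w _ => subForwardAux_mono T B _ w h)

end Monotone

theorem tree_of_trees_decorrelation_general
    {Ω : Type*} [MeasurableSpace Ω] (μ : Measure Ω)
    (E : V → V → Prop) (u : V) (B : V → ℕ)
    (A : V → Ω → ℕ)
    (hindep : iIndepFun A μ)
    (A' : (i : V) → SimplePath V E i u → Ω → ℕ)
    (hA'indep : iIndepFun
      (fun p : (Σ i : V, SimplePath V E i u) => A' p.1 p.2) μ)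
    (hA'ident : ∀ i P, IdentDistrib (A' i P) (A i) μ μ)
    (sel : (T : RootedSubtree V E u) → (i : V) → SimplePath V E i u) :
    ∀ a : ℝ,
      μ {ω | ∀ T : RootedSubtree V E u,
          (rootLoad T B (fun i => A' i (sel T i) ω) : ℝ) ≤ a} ≤
      μ {ω | ∀ T : RootedSubtree V E u,
          (rootLoad T B (fun i => A i ω) : ℝ) ≤ a} := fun a =>
  measure_labelledEvent_le hindep hA'indep (fun p => hA'ident p.1 p.2)
    (fun T => (isLowerSet_Iic a).preimage (Nat.mono_cast.comp (rootLoad_mono T B))) sel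

/-- Let `(V, E)` be a finite directed graph, `u ∈ V`, `B` capacities, and
`(A_i)` mutually independent `ℕ`-valued random variables.  For each `i` and each directed
simple path `P` from `i` to `u`, let `A_{i,P}` be distributed as `A_i`, the whole family
being mutually independent, and for a rooted subtree `T` of `G` at `u` let `P_i(T)` be the
unique path from `i` to `u` in `T` (formalized by the selector `sel` together with the
hypothesis `hsel`).  Then `max_T ℓ_u^T((A_{i,P_i(T)})_i)` stochastically dominates
`max_T ℓ_u^T((A_i)_i)`: for every `a ∈ ℝ`,
`P(max_T ℓ_u^T((A_{i,P_i(T)})_i) ≤ a) ≤ P(max_T ℓ_u^T((A_i)_i) ≤ a)`. -/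
theorem tree_of_trees_decorrelation
    {Ω : Type*} [MeasurableSpace Ω] (μ : Measure Ω) [IsProbabilityMeasure μ]
    (E : V → V → Prop) (u : V) (B : V → ℕ)
    (A : V → Ω → ℕ) (hAmeas : ∀ i, Measurable (A i))
    (hindep : iIndepFun A μ)
    (A' : (i : V) → SimplePath V E i u → Ω → ℕ)
    (hA'meas : ∀ i P, Measurable (A' i P))
    (hA'indep : iIndepFun
      (fun p : (Σ i : V, SimplePath V E i u) => A' p.1 p.2) μ)
    (hA'ident : ∀ i P, IdentDistrib (A' i P) (A i) μ μ)
    (sel : (T : RootedSubtree V E u) → (i : V) → SimplePath V E i u)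
    (hsel : ∀ (T : RootedSubtree V E u), ∀ i ∈ T.S, (sel T i).verts = treePathVerts T i) :
    ∀ a : ℝ,
      μ {ω | ∀ T : RootedSubtree V E u,
          (rootLoad T B (fun i => A' i (sel T i) ω) : ℝ) ≤ a} ≤
      μ {ω | ∀ T : RootedSubtree V E u,
          (rootLoad T B (fun i => A i ω) : ℝ) ≤ a} :=
  tree_of_trees_decorrelation_general μ E u B A hindep A' hA'indep hA'ident sel
end

section
/- Let ε ∈ (0, 1/2], let d ≥ 1 be an integer, and set ρ = 1 + ε²/d. Let B ∈ ℕ, let m ≤ d, and let A, F_1, …, F_m be mutually independent ℕ-valued random variables such that E[exp(ε F_i)] ≤ ρ for each i ∈ {1, …, m} and E[exp(ε(A − B))] ≤ ε²/(e·d). Then E[exp(ε · max(A + Σ_{i=1}^m F_i − B + 1, 0))] ≤ ρ. -/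
/-!
Bound `exp (ε · max (S, 0))` by `1 + exp (ε S)`, where `S = A + Σ Fᵢ - B + 1`. By independence
the moment generating function of `S` factors as `e^ε · E[e^{ε(A-B)}] · ∏ E[e^{ε Fᵢ}]`, which
is at most `e^ε · ε²/(e d) · (1 + ε²/d)^m ≤ e^{ε + ε²} · ε²/(e d) ≤ ε²/d`, using `m ≤ d` and
`ε + ε² ≤ 1` for `ε ≤ 1/2`.
-/

open MeasureTheory ProbabilityTheory Real

lemma one_add_div_pow_le_exp {t : ℝ} (ht : 0 ≤ t) {m d : ℕ} (hm : m ≤ d) :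
    (1 + t / d) ^ m ≤ exp t :=
  calc (1 + t / d) ^ m ≤ exp (t / d) ^ m := by
        gcongr
        linarith [add_one_le_exp (t / d)]
    _ = exp (m / d * t) := by rw [← exp_nat_mul]; ring_nf
    _ ≤ exp t := by
        gcongr
        exact mul_le_of_le_one_left ht (div_le_one_of_le₀ (by exact_mod_cast hm) d.cast_nonneg)

lemma exp_mul_one_add_sq_div_pow_le_exp_one {ε : ℝ} (hε0 : 0 ≤ ε) (hε : ε ≤ 1 / 2)
    {m d : ℕ} (hm : m ≤ d) : exp ε * (1 + ε ^ 2 / d) ^ m ≤ exp 1 :=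
  calc exp ε * (1 + ε ^ 2 / d) ^ m ≤ exp ε * exp (ε ^ 2) := by
        gcongr; exact one_add_div_pow_le_exp (sq_nonneg ε) hm
    _ = exp (ε + ε ^ 2) := (exp_add _ _).symm
    _ ≤ exp 1 := exp_le_exp.2 (by nlinarith)

lemma exp_mul_max_le_one_add_exp (ε x : ℝ) : exp (ε * max x 0) ≤ 1 + exp (ε * x) := by
  rcases le_total x 0 with h | h
  · rw [max_eq_right h, mul_zero, exp_zero]
    linarith [exp_pos (ε * x)]
  · rw [max_eq_left h]
    linarith

lemma lintegral_ofReal_exp_mul_max_le {Ω : Type*} [MeasurableSpace Ω] (μ : Measure Ω)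
    [IsProbabilityMeasure μ] (ε : ℝ) (X : Ω → ℝ) :
    ∫⁻ ω, ENNReal.ofReal (exp (ε * max (X ω) 0)) ∂μ ≤
      1 + ∫⁻ ω, ENNReal.ofReal (exp (ε * X ω)) ∂μ :=
  calc ∫⁻ ω, ENNReal.ofReal (exp (ε * max (X ω) 0)) ∂μ
      ≤ ∫⁻ ω, (1 + ENNReal.ofReal (exp (ε * X ω))) ∂μ := by
        refine lintegral_mono fun ω => ?_
        rw [← ENNReal.ofReal_one, ← ENNReal.ofReal_add zero_le_one (exp_pos _).le]
        exact ENNReal.ofReal_le_ofReal (exp_mul_max_le_one_add_exp ε (X ω))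
    _ = 1 + ∫⁻ ω, ENNReal.ofReal (exp (ε * X ω)) ∂μ := by
        rw [lintegral_add_left measurable_const, lintegral_const, measure_univ, mul_one]

namespace ProbabilityTheory.iIndepFun

variable {Ω : Type*} [MeasurableSpace Ω] {μ : Measure Ω}

lemma lintegral_ofReal_exp_sum {ι : Type*} [Fintype ι] {β : ι → Type*}
    [∀ i, MeasurableSpace (β i)] {X : (i : ι) → Ω → β i} (hX : iIndepFun X μ)
    (hXm : ∀ i, Measurable (X i)) {f : (i : ι) → β i → ℝ} (hf : ∀ i, Measurable (f i)) :
    ∫⁻ ω, ENNReal.ofReal (exp (∑ i, f i (X i ω))) ∂μ =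
      ∏ i, ∫⁻ ω, ENNReal.ofReal (exp (f i (X i ω))) ∂μ := by
  simp_rw [exp_sum, ENNReal.ofReal_prod_of_nonneg fun i _ => (exp_pos _).le]
  exact lintegral_prod_eq_prod_lintegral_of_indepFun _ _
    (hX.comp _ fun i => ENNReal.measurable_ofReal.comp (measurable_exp.comp (hf i)))
    fun i => ENNReal.measurable_ofReal.comp (measurable_exp.comp ((hf i).comp (hXm i)))

lemma lintegral_ofReal_exp_add_sum_of_cons {β : Type*} [MeasurableSpace β] {m : ℕ}
    {X : Ω → β} {Y : Fin m → Ω → β}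
    (hXY : iIndepFun (Fin.cons X Y : Fin (m + 1) → Ω → β) μ)
    (hX : Measurable X) (hY : ∀ i, Measurable (Y i)) {f g : β → ℝ}
    (hf : Measurable f) (hg : Measurable g) :
    ∫⁻ ω, ENNReal.ofReal (exp (f (X ω) + ∑ i, g (Y i ω))) ∂μ =
      (∫⁻ ω, ENNReal.ofReal (exp (f (X ω))) ∂μ) *
        ∏ i, ∫⁻ ω, ENNReal.ofReal (exp (g (Y i ω))) ∂μ := by
  have := hXY.lintegral_ofReal_exp_sum (f := Fin.cons f fun _ => g)
    (Fin.cases hX hY) (Fin.cases hf fun _ => hg)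
  simpa only [Fin.sum_univ_succ, Fin.prod_univ_succ, Fin.cons_zero, Fin.cons_succ] using this

end ProbabilityTheory.iIndepFun

theorem mgf_forward_induction_step_general
    {Ω : Type*} [MeasurableSpace Ω] (μ : Measure Ω) [IsProbabilityMeasure μ]
    (ε : ℝ) (hε0 : 0 < ε) (hε : ε ≤ 1 / 2) (d : ℕ)
    (B : ℕ) (m : ℕ) (hm : m ≤ d)
    (A : Ω → ℕ) (F : Fin m → Ω → ℕ)
    (hAmeas : Measurable A) (hFmeas : ∀ i, Measurable (F i))
    (hindep : iIndepFun
      (Fin.cons A F : Fin (m + 1) → Ω → ℕ) μ)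
    (hF : ∀ i, ∫⁻ ω, ENNReal.ofReal (Real.exp (ε * (F i ω : ℝ))) ∂μ ≤
      ENNReal.ofReal (1 + ε ^ 2 / d))
    (hA : ∫⁻ ω, ENNReal.ofReal (Real.exp (ε * ((A ω : ℝ) - (B : ℝ)))) ∂μ ≤
      ENNReal.ofReal (ε ^ 2 / (Real.exp 1 * d))) :
    ∫⁻ ω, ENNReal.ofReal
        (Real.exp (ε * max ((A ω : ℝ) + (∑ i, (F i ω : ℝ)) - (B : ℝ) + 1) 0)) ∂μ ≤
      ENNReal.ofReal (1 + ε ^ 2 / d) := by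
  set ρ := 1 + ε ^ 2 / d
  have hsplit : ∀ ω, ENNReal.ofReal (exp (ε * ((A ω : ℝ) + ∑ i, (F i ω : ℝ) - B + 1))) =
      ENNReal.ofReal (exp ε) *
        ENNReal.ofReal (exp (ε * ((A ω : ℝ) - B) + ∑ i, ε * (F i ω : ℝ))) := fun ω => by
    rw [← ENNReal.ofReal_mul (exp_pos _).le, ← exp_add, ← Finset.mul_sum]
    ring_nf
  have hreal : exp ε * (ε ^ 2 / (exp 1 * d) * ρ ^ m) ≤ ε ^ 2 / d :=
    calc exp ε * (ε ^ 2 / (exp 1 * d) * ρ ^ m)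
        = exp ε * ρ ^ m * (ε ^ 2 / d) / exp 1 := by field_simp
      _ ≤ exp 1 * (ε ^ 2 / d) / exp 1 := by
        gcongr; exact exp_mul_one_add_sq_div_pow_le_exp_one hε0.le hε hm
      _ = ε ^ 2 / d := by field_simp
  calc _ ≤ 1 + ∫⁻ ω, ENNReal.ofReal (exp (ε * ((A ω : ℝ) + ∑ i, (F i ω : ℝ) - B + 1))) ∂μ :=
        lintegral_ofReal_exp_mul_max_le μ ε _
    _ = 1 + ENNReal.ofReal (exp ε) *
          ((∫⁻ ω, ENNReal.ofReal (exp (ε * ((A ω : ℝ) - B))) ∂μ) *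
            ∏ i, ∫⁻ ω, ENNReal.ofReal (exp (ε * (F i ω : ℝ))) ∂μ) := by
        rw [lintegral_congr hsplit, lintegral_const_mul' _ _ ENNReal.ofReal_ne_top,
          hindep.lintegral_ofReal_exp_add_sum_of_cons hAmeas hFmeas
            (f := fun n : ℕ => ε * (n - B)) (g := fun n : ℕ => ε * n)
            (by fun_prop) (by fun_prop)]
    _ ≤ 1 + ENNReal.ofReal (exp ε) *
          (ENNReal.ofReal (ε ^ 2 / (exp 1 * d)) * ENNReal.ofReal ρ ^ m) := by
        gcongr
        simpa using Finset.prod_le_pow_card Finset.univ _ _ fun i _ => hF i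
    _ ≤ ENNReal.ofReal (1 + ε ^ 2 / d) := by
        rw [← ENNReal.ofReal_pow (by positivity), ← ENNReal.ofReal_mul (by positivity),
          ← ENNReal.ofReal_mul (exp_pos _).le, ENNReal.ofReal_add zero_le_one (by positivity),
          ENNReal.ofReal_one]
        gcongr

/-- Let `ε ∈ (0, 1/2]`, `d ≥ 1` an integer, `ρ = 1 + ε²/d`, `B ∈ ℕ` and
`m ≤ d`. Let `A, F_1, …, F_m` be mutually independent `ℕ`-valued random variables with
`E[exp(ε F_i)] ≤ ρ` for each `i` and `E[exp(ε(A − B))] ≤ ε²/(e·d)`. Then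
`E[exp(ε · max(A + Σ_i F_i − B + 1, 0))] ≤ ρ`. -/
theorem mgf_forward_induction_step
    {Ω : Type*} [MeasurableSpace Ω] (μ : Measure Ω) [IsProbabilityMeasure μ]
    (ε : ℝ) (hε0 : 0 < ε) (hε : ε ≤ 1 / 2) (d : ℕ) (hd : 1 ≤ d)
    (B : ℕ) (m : ℕ) (hm : m ≤ d)
    (A : Ω → ℕ) (F : Fin m → Ω → ℕ)
    (hAmeas : Measurable A) (hFmeas : ∀ i, Measurable (F i))
    (hindep : iIndepFun
      (Fin.cons A F : Fin (m + 1) → Ω → ℕ) μ)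
    (hF : ∀ i, ∫⁻ ω, ENNReal.ofReal (Real.exp (ε * (F i ω : ℝ))) ∂μ ≤
      ENNReal.ofReal (1 + ε ^ 2 / d))
    (hA : ∫⁻ ω, ENNReal.ofReal (Real.exp (ε * ((A ω : ℝ) - (B : ℝ)))) ∂μ ≤
      ENNReal.ofReal (ε ^ 2 / (Real.exp 1 * d))) :
    ∫⁻ ω, ENNReal.ofReal
        (Real.exp (ε * max ((A ω : ℝ) + (∑ i, (F i ω : ℝ)) - (B : ℝ) + 1) 0)) ∂μ ≤
      ENNReal.ofReal (1 + ε ^ 2 / d) :=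
  mgf_forward_induction_step_general μ ε hε0 hε d B m hm A F hAmeas hFmeas hindep hF hA
end

section
/- Let ε ∈ (0, 1/2] and let B > 0 be a real number. Let X_1, …, X_m be mutually independent Bernoulli random variables with P(X_j = 1) = p_j, and suppose Σ_{j=1}^m p_j ≤ (1 − ε)B. Let A = Σ_{j=1}^m X_j. Then E[exp(ε(A − B))] ≤ exp(−ε² B / 4). -/
/-! Chernoff's method: by independence `E[exp(εA)] = ∏ (1 + p_j (e^ε - 1)) ≤ exp((e^ε - 1) ∑ p_j)`,
which is at most `exp((e^ε - 1)(1 - ε) B)`, and the cubic Taylor bound on `exp` gives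
`(e^ε - 1)(1 - ε) ≤ ε - ε² / 4` for `0 ≤ ε ≤ 1/2`. -/

open MeasureTheory ProbabilityTheory

section Bernoulli

variable {Ω ι : Type*} [MeasurableSpace Ω] {μ : Measure Ω} [IsProbabilityMeasure μ]

lemma mgf_eq_of_forall_eq_zero_or_eq_one {X : Ω → ℝ} (hX : Measurable X)
    (h01 : ∀ ω, X ω = 0 ∨ X ω = 1) (t : ℝ) :
    mgf X μ t = 1 + μ.real {ω | X ω = 1} * (Real.exp t - 1) := by
  have hexp : (fun ω ↦ Real.exp (t * X ω))
      = fun ω ↦ 1 + {ω | X ω = 1}.indicator (fun _ ↦ Real.exp t - 1) ω := by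
    ext ω
    rcases h01 ω with h | h <;> simp [h]
  have hset : MeasurableSet {ω | X ω = 1} := hX (measurableSet_singleton 1)
  rw [mgf, hexp, integral_add (integrable_const 1) ((integrable_const _).indicator hset),
    integral_indicator_const _ hset]
  simp

lemma ProbabilityTheory.iIndepFun.mgf_sum_le_of_forall_eq_zero_or_eq_one {X : ι → Ω → ℝ}
    (hindep : iIndepFun X μ) (hX : ∀ i, Measurable (X i))
    (h01 : ∀ i ω, X i ω = 0 ∨ X i ω = 1) (s : Finset ι) (t : ℝ) :
    mgf (∑ i ∈ s, X i) μ t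
      ≤ Real.exp ((∑ i ∈ s, μ.real {ω | X i ω = 1}) * (Real.exp t - 1)) := by
  rw [hindep.mgf_sum hX, Finset.sum_mul, Real.exp_sum]
  refine Finset.prod_le_prod (fun i _ ↦ mgf_nonneg) fun i _ ↦ ?_
  rw [mgf_eq_of_forall_eq_zero_or_eq_one (hX i) (h01 i), add_comm]
  exact Real.add_one_le_exp _

end Bernoulli

lemma lintegral_ofReal_exp_mul_eq_ofReal_mgf {Ω : Type*} [MeasurableSpace Ω] {μ : Measure Ω}
    {X : Ω → ℝ} {t : ℝ} (hint : Integrable (fun ω ↦ Real.exp (t * X ω)) μ) :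
    ∫⁻ ω, ENNReal.ofReal (Real.exp (t * X ω)) ∂μ = ENNReal.ofReal (mgf X μ t) :=
  (ofReal_integral_eq_lintegral_ofReal hint (.of_forall fun _ ↦ (Real.exp_pos _).le)).symm

lemma exp_sub_one_mul_one_sub_le {ε : ℝ} (h0 : 0 ≤ ε) (h : ε ≤ 1 / 2) :
    (Real.exp ε - 1) * (1 - ε) ≤ ε - ε ^ 2 / 4 := by
  have hb := Real.exp_bound' h0 (by linarith) (n := 3) (by norm_num)
  norm_num [Finset.sum_range_succ, Nat.factorial] at hb
  nlinarith [sq_nonneg ε, pow_nonneg h0 3]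

/-- Let `ε ∈ (0, 1/2]` and `B > 0` real. If `X_1, …, X_m` are mutually
independent Bernoulli random variables with `P(X_j = 1) = p_j` and `Σ_j p_j ≤ (1 − ε)B`,
then with `A = Σ_j X_j` we have `E[exp(ε(A − B))] ≤ exp(−ε² B / 4)`. -/
theorem mgf_excess_bernoulli_sum_le
    {Ω : Type*} [MeasurableSpace Ω] (μ : Measure Ω) [IsProbabilityMeasure μ]
    (ε B : ℝ) (hε0 : 0 < ε) (hε : ε ≤ 1 / 2) (hB : 0 < B)
    (m : ℕ) (p : Fin m → ℝ) (hp : ∀ j, p j ∈ Set.Icc (0 : ℝ) 1)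
    (hsum : ∑ j, p j ≤ (1 - ε) * B)
    (X : Fin m → Ω → ℝ) (hXmeas : ∀ j, Measurable (X j))
    (hX01 : ∀ j ω, X j ω = 0 ∨ X j ω = 1)
    (hXp : ∀ j, μ {ω | X j ω = 1} = ENNReal.ofReal (p j))
    (hindep : iIndepFun X μ) :
    ∫⁻ ω, ENNReal.ofReal (Real.exp (ε * ((∑ j, X j ω) - B))) ∂μ ≤
      ENNReal.ofReal (Real.exp (-(ε ^ 2) * B / 4)) := by
  have hprob : ∀ j, μ.real {ω | X j ω = 1} = p j := fun j ↦ by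
    rw [measureReal_def, hXp, ENNReal.toReal_ofReal (hp j).1]
  have hbdd : ∀ ω, (∑ j, X j ω) - B ≤ m - B := fun ω ↦ by
    have : ∑ j, X j ω ≤ ∑ _j : Fin m, (1 : ℝ) :=
      Finset.sum_le_sum fun j _ ↦ by rcases hX01 j ω with h | h <;> simp [h]
    simpa using this
  have hint := integrable_exp_mul_of_le (μ := μ) ε (m - B) hε0.le
    (by fun_prop) (.of_forall hbdd)
  rw [lintegral_ofReal_exp_mul_eq_ofReal_mgf hint]
  refine ENNReal.ofReal_le_ofReal ?_
  have hmgf := hindep.mgf_sum_le_of_forall_eq_zero_or_eq_one hXmeas hX01 Finset.univ ε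
  simp only [hprob] at hmgf
  have hc : 0 ≤ Real.exp ε - 1 := by linarith [Real.add_one_le_exp ε]
  calc mgf (fun ω ↦ (∑ j, X j ω) - B) μ ε
      = mgf (∑ j, X j) μ ε * Real.exp (ε * -B) := by
        simp only [sub_eq_add_neg, mgf_add_const, Finset.sum_fn]
    _ ≤ Real.exp ((∑ j, p j) * (Real.exp ε - 1)) * Real.exp (ε * -B) := by
        gcongr
    _ ≤ Real.exp (-(ε ^ 2) * B / 4) := by
        rw [← Real.exp_add, Real.exp_le_exp]
        linarith [mul_le_mul_of_nonneg_right hsum hc,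
          mul_le_mul_of_nonneg_right (exp_sub_one_mul_one_sub_le hε0.le hε) hB.le]
end

section
/- There exists a universal constant c > 0 with the following property: for every ε ∈ (0, 1/2] and every real B ≥ c·log(1/ε)/ε², if X_1, …, X_m are mutually independent Bernoulli random variables with parameters p_1, …, p_m satisfying Σ_{j=1}^m p_j ≤ (1 − ε)B, and A = Σ_{j=1}^m X_j, then E[exp(ε(A − B))] ≤ ε²/(3e). -/
open MeasureTheory ProbabilityTheory

/-!
A Chernoff bound: `E[exp(εA)] = ∏ⱼ (1 + (e^ε - 1) pⱼ) ≤ exp((e^ε - 1) Σⱼ pⱼ) ≤ exp((e^ε - 1)(1 - ε)B)`,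
and `(e^ε - 1)(1 - ε) ≤ ε - ε²/4` for `0 ≤ ε ≤ 1`, so `E[exp(ε(A - B))] ≤ exp(-ε²B/4)`.
For `B ≥ 24 log(1/ε)/ε²` this is at most `ε⁶`, which is below `ε²/(3e)` once `ε ≤ 1/2`.
-/

open Real

lemma Real.exp_le_one_add_add_three_quarters_mul_sq {x : ℝ} (hx : |x| ≤ 1) :
    exp x ≤ 1 + x + 3 / 4 * x ^ 2 := by
  have h := (abs_sub_le_iff.1 (exp_bound hx (n := 2) (by norm_num))).1
  simp only [Finset.sum_range_succ, Finset.sum_range_zero, Nat.factorial, pow_abs] at h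
  norm_num at h
  linarith

lemma Real.sub_one_mul_one_sub_sub_le {ε : ℝ} (h₀ : 0 ≤ ε) (h₁ : ε ≤ 1) :
    (exp ε - 1) * (1 - ε) - ε ≤ -(ε ^ 2 / 4) := by
  have h := exp_le_one_add_add_three_quarters_mul_sq (abs_le.2 ⟨by linarith, h₁⟩)
  nlinarith

lemma Real.exp_neg_le_pow_of_mul_log_le {ε a : ℝ} {k : ℕ} (hε : 0 < ε)
    (ha : k * log (1 / ε) ≤ a) :
    exp (-a) ≤ ε ^ k := by
  calc exp (-a) ≤ exp (k * log ε) := by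
        rw [one_div, log_inv] at ha
        exact exp_le_exp.2 (by linarith)
    _ = ε ^ k := by rw [← log_pow, exp_log (by positivity)]

lemma Real.exp_chernoff_exponent_le {ε B S : ℝ} (hε : 0 < ε) (hε₂ : ε ≤ 1 / 2)
    (hB : 24 * log (1 / ε) / ε ^ 2 ≤ B) (hS : S ≤ (1 - ε) * B) :
    exp ((exp ε - 1) * S - ε * B) ≤ ε ^ 2 / (3 * exp 1) := by
  have hlog : 0 ≤ log (1 / ε) := log_nonneg (by rw [le_div_iff₀ hε]; linarith)
  have hB₀ : 0 ≤ B := le_trans (by positivity) hB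
  have hexp : 0 ≤ exp ε - 1 := by linarith [one_le_exp hε.le]
  have hexponent := sub_one_mul_one_sub_sub_le hε.le (by linarith)
  have hBlog : ((6 : ℕ) : ℝ) * log (1 / ε) ≤ ε ^ 2 / 4 * B := by
    rw [div_le_iff₀ (by positivity)] at hB
    push_cast
    linarith
  calc exp ((exp ε - 1) * S - ε * B) ≤ exp (-(ε ^ 2 / 4 * B)) := by
        refine exp_le_exp.2 ?_
        nlinarith [mul_le_mul_of_nonneg_left hS hexp, mul_le_mul_of_nonneg_right hexponent hB₀]
    _ ≤ ε ^ 6 := exp_neg_le_pow_of_mul_log_le hε hBlog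
    _ ≤ ε ^ 2 / (3 * exp 1) := by
        have hε₄ : ε ^ 4 ≤ (1 / 2) ^ 4 := pow_le_pow_left₀ hε.le hε₂ 4
        have he : exp 1 < 3 := lt_trans exp_one_lt_d9 (by norm_num)
        have h : ε ^ 4 * (3 * exp 1) ≤ 1 := by nlinarith [pow_pos hε 4]
        rw [le_div_iff₀ (by positivity)]
        calc ε ^ 6 * (3 * exp 1) = ε ^ 2 * (ε ^ 4 * (3 * exp 1)) := by ring
          _ ≤ ε ^ 2 := mul_le_of_le_one_right (by positivity) h

namespace ProbabilityTheory

variable {Ω ι : Type*} [MeasurableSpace Ω] {μ : Measure Ω}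

lemma mgf_of_zero_or_one [IsProbabilityMeasure μ] {X : Ω → ℝ} (hX : Measurable X)
    (h01 : ∀ ω, X ω = 0 ∨ X ω = 1) (t : ℝ) :
    mgf X μ t = 1 + (exp t - 1) * μ.real {ω | X ω = 1} := by
  have hset : MeasurableSet {ω | X ω = 1} := hX (measurableSet_singleton 1)
  have hexp : (fun ω ↦ exp (t * X ω))
      = fun ω ↦ 1 + (exp t - 1) * {ω | X ω = 1}.indicator 1 ω := by
    funext ω
    rcases h01 ω with h | h <;> simp [h]
  rw [mgf, hexp, integral_add (integrable_const 1)
    (((integrable_const 1).indicator hset).const_mul _), integral_const_mul,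
    integral_indicator_one hset]
  simp

lemma mgf_le_exp_of_zero_or_one [IsProbabilityMeasure μ] {X : Ω → ℝ} (hX : Measurable X)
    (h01 : ∀ ω, X ω = 0 ∨ X ω = 1) (t : ℝ) :
    mgf X μ t ≤ exp ((exp t - 1) * μ.real {ω | X ω = 1}) := by
  rw [mgf_of_zero_or_one hX h01, add_comm]
  exact add_one_le_exp _

lemma iIndepFun.mgf_sum_le_of_zero_or_one {X : ι → Ω → ℝ} (h_indep : iIndepFun X μ)
    (h_meas : ∀ i, Measurable (X i)) (h01 : ∀ i ω, X i ω = 0 ∨ X i ω = 1) (s : Finset ι)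
    (t : ℝ) :
    mgf (∑ i ∈ s, X i) μ t ≤ exp ((exp t - 1) * ∑ i ∈ s, μ.real {ω | X i ω = 1}) := by
  have := h_indep.isProbabilityMeasure
  rw [h_indep.mgf_sum h_meas, Finset.mul_sum, exp_sum]
  exact Finset.prod_le_prod (fun _ _ ↦ mgf_nonneg)
    fun i _ ↦ mgf_le_exp_of_zero_or_one (h_meas i) (h01 i) t

lemma iIndepFun.lintegral_exp_mul_sum_sub_le_of_zero_or_one [Fintype ι] {X : ι → Ω → ℝ}
    (h_indep : iIndepFun X μ) (h_meas : ∀ i, Measurable (X i))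
    (h01 : ∀ i ω, X i ω = 0 ∨ X i ω = 1) (t B : ℝ) :
    ∫⁻ ω, ENNReal.ofReal (exp (t * (∑ i, X i ω - B))) ∂μ ≤
      ENNReal.ofReal (exp ((exp t - 1) * ∑ i, μ.real {ω | X i ω = 1} - t * B)) := by
  have := h_indep.isProbabilityMeasure
  have h_bdd : ∀ i, ∀ᵐ ω ∂μ, X i ω ∈ Set.Icc (0 : ℝ) 1 := fun i ↦
    ae_of_all _ fun ω ↦ by rcases h01 i ω with h | h <;> simp [h]
  have h_int : Integrable (fun ω ↦ exp (t * (∑ i, X i) ω) * exp (-(t * B))) μ :=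
    (h_indep.integrable_exp_mul_sum h_meas fun i _ ↦
      integrable_exp_mul_of_mem_Icc (h_meas i).aemeasurable (h_bdd i)).mul_const _
  calc ∫⁻ ω, ENNReal.ofReal (exp (t * (∑ i, X i ω - B))) ∂μ
      = ∫⁻ ω, ENNReal.ofReal (exp (t * (∑ i, X i) ω) * exp (-(t * B))) ∂μ := by
        simp only [Finset.sum_apply, ← exp_add, sub_eq_add_neg, mul_add, mul_neg]
    _ = ENNReal.ofReal (mgf (∑ i, X i) μ t * exp (-(t * B))) := by
        rw [← ofReal_integral_eq_lintegral_ofReal h_int (ae_of_all _ fun _ ↦ by positivity),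
          integral_mul_const, mgf]
    _ ≤ ENNReal.ofReal (exp ((exp t - 1) * ∑ i, μ.real {ω | X i ω = 1}) * exp (-(t * B))) := by
        gcongr
        exact h_indep.mgf_sum_le_of_zero_or_one h_meas h01 _ t
    _ = ENNReal.ofReal (exp ((exp t - 1) * ∑ i, μ.real {ω | X i ω = 1} - t * B)) := by
        rw [← exp_add, ← sub_eq_add_neg]

end ProbabilityTheory

/-- There is a universal constant `c > 0` such that for every
`ε ∈ (0, 1/2]` and every real `B ≥ c·log(1/ε)/ε²`, if `X_1, …, X_m` are mutually
independent Bernoulli random variables with parameters `p_j` satisfying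
`Σ_j p_j ≤ (1 − ε)B`, and `A = Σ_j X_j`, then `E[exp(ε(A − B))] ≤ ε²/(3e)`. -/
theorem exists_universal_constant_mgf_bound :
    ∃ c : ℝ, 0 < c ∧
      ∀ (Ω : Type) (_ : MeasurableSpace Ω) (μ : Measure Ω), IsProbabilityMeasure μ →
        ∀ (ε B : ℝ), 0 < ε → ε ≤ 1 / 2 → c * Real.log (1 / ε) / ε ^ 2 ≤ B →
          ∀ (m : ℕ) (p : Fin m → ℝ), (∀ j, p j ∈ Set.Icc (0 : ℝ) 1) →
            (∑ j, p j) ≤ (1 - ε) * B →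
            ∀ (X : Fin m → Ω → ℝ), (∀ j, Measurable (X j)) →
              (∀ j ω, X j ω = 0 ∨ X j ω = 1) →
              (∀ j, μ {ω | X j ω = 1} = ENNReal.ofReal (p j)) →
              iIndepFun X μ →
              ∫⁻ ω, ENNReal.ofReal (Real.exp (ε * ((∑ j, X j ω) - B))) ∂μ ≤
                ENNReal.ofReal (ε ^ 2 / (3 * Real.exp 1)) := by
  refine ⟨24, by norm_num, ?_⟩
  intro Ω _ μ _ ε B hε hε₂ hB m p hp hsum X hXm hX01 hXp hindep
  have hpX : ∀ j, μ.real {ω | X j ω = 1} = p j := fun j ↦ by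
    rw [measureReal_def, hXp, ENNReal.toReal_ofReal (hp j).1]
  calc ∫⁻ ω, ENNReal.ofReal (exp (ε * ((∑ j, X j ω) - B))) ∂μ
      ≤ ENNReal.ofReal (exp ((exp ε - 1) * ∑ j, p j - ε * B)) := by
        simpa only [hpX] using hindep.lintegral_exp_mul_sum_sub_le_of_zero_or_one hXm hX01 ε B
    _ ≤ ENNReal.ofReal (ε ^ 2 / (3 * exp 1)) :=
        ENNReal.ofReal_le_ofReal (exp_chernoff_exponent_le hε hε₂ hB hsum)
end

section
/- Let p : ℤ → ℝ and t ∈ ℤ. Suppose the left parent ℓ(t) and the right parent r(t) both exist. Then either ℓ(r(t)) exists and ℓ(r(t)) = ℓ(t), or r(ℓ(t)) exists and r(ℓ(t)) = r(t). -/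
/-! Between its parents, `t` is the minimum of `p`. If `p ℓ ≤ p r`, every `s < r` lying above `ℓ`
has `p s ≥ p t > p r`, so `ℓ` is the left parent of `r`; otherwise every `s > ℓ` lying below `r`
has `p s ≥ p t ≥ p ℓ`, so `r` is the right parent of `ℓ`. -/

/-- `s` is the left parent of `t` for prices `p`: the greatest `s < t` with `p s ≤ p t`. -/
def IsLeftParent (p : ℤ → ℝ) (t s : ℤ) : Prop :=
  s < t ∧ p s ≤ p t ∧ ∀ s', s' < t → p s' ≤ p t → s' ≤ s

/-- `s` is the right parent of `t` for prices `p`: the least `s > t` with `p s < p t`. -/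
def IsRightParent (p : ℤ → ℝ) (t s : ℤ) : Prop :=
  t < s ∧ p s < p t ∧ ∀ s', t < s' → p s' < p t → s ≤ s'

theorem IsLeftParent.lt_apply {p : ℤ → ℝ} {t l s : ℤ} (hl : IsLeftParent p t l)
    (hls : l < s) (hst : s < t) : p t < p s :=
  lt_of_not_ge fun h => (hl.2.2 s hst h).not_gt hls

theorem IsRightParent.le_apply {p : ℤ → ℝ} {t r s : ℤ} (hr : IsRightParent p t r)
    (hts : t < s) (hsr : s < r) : p t ≤ p s :=
  le_of_not_gt fun h => (hr.2.2 s hts h).not_gt hsr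

theorem isMinOn_Ioo_of_isLeftParent_of_isRightParent {p : ℤ → ℝ} {t l r : ℤ}
    (hl : IsLeftParent p t l) (hr : IsRightParent p t r) : IsMinOn p (Set.Ioo l r) t := by
  refine isMinOn_iff.2 fun s ⟨hls, hsr⟩ => ?_
  rcases lt_trichotomy s t with hst | rfl | hts
  · exact (hl.lt_apply hls hst).le
  · exact le_rfl
  · exact hr.le_apply hts hsr

/-- If both the left parent `ℓ(t)` and the right parent `r(t)` of `t`
exist, then either `ℓ(r(t))` exists and equals `ℓ(t)`, or `r(ℓ(t))` exists and equals
`r(t)`. -/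
theorem leftParent_rightParent_compat (p : ℤ → ℝ) (t l r : ℤ)
    (hl : IsLeftParent p t l) (hr : IsRightParent p t r) :
    IsLeftParent p r l ∨ IsRightParent p l r := by
  have hmin := isMinOn_Ioo_of_isLeftParent_of_isRightParent hl hr
  have hlr : l < r := hl.1.trans hr.1
  rcases le_or_gt (p l) (p r) with hle | hgt
  · refine .inl ⟨hlr, hle, fun s hsr hps => le_of_not_gt fun hls => ?_⟩
    exact (hmin ⟨hls, hsr⟩).not_gt (hps.trans_lt hr.2.1)
  · refine .inr ⟨hlr, hgt, fun s hls hps => le_of_not_gt fun hsr => ?_⟩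
    exact (hmin ⟨hls, hsr⟩).not_gt (hps.trans_le hl.2.1)
end

section
/- Let p : ℤ → ℝ and t ∈ ℤ, and suppose the ancestor set C(t) is finite. Then C(t) is totally ordered by ancestry: for all t₁, t₂ ∈ C(t), either t₁ ∈ C(t₂) or t₂ ∈ C(t₁). -/
/-- There is a forward edge from `s` to `t` if `s` is the left or the right parent of `t`. -/
def FwdEdge (p : ℤ → ℝ) (s t : ℤ) : Prop :=
  IsLeftParent p t s ∨ IsRightParent p t s

/-- The ancestor set `C(t)`: all `s` from which `t` is reachable by forward edges. -/
def AncestorSet (p : ℤ → ℝ) (t : ℤ) : Set ℤ :=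
  {s | Relation.ReflTransGen (FwdEdge p) s t}

/-! Two parents of the same node are always joined by an edge. For any relation with this
property, a parent `a` of `z` is comparable with every ancestor `y` of `z` (induct on the path
from `y`), and then any two ancestors of `z` are comparable (induct on the path from one of them,
passing through its last step `a → z`). -/

namespace Relation

variable {α : Type*} {r : α → α → Prop}

theorem ReflTransGen.comparable_of_rel_of_parents_comparable
    (hr : ∀ {a b z}, r a z → r b z → a = b ∨ r a b ∨ r b a) {a y z : α}
    (ha : r a z) (hy : ReflTransGen r y z) : ReflTransGen r y a ∨ ReflTransGen r a y := by
  induction hy generalizing a with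
  | refl => exact .inr (.single ha)
  | tail hyb hbz ih =>
    rcases hr ha hbz with rfl | hab | hba
    · exact .inl hyb
    · exact ih hab
    · exact .inl (hyb.tail hba)

theorem ReflTransGen.total_of_parents_comparable
    (hr : ∀ {a b z}, r a z → r b z → a = b ∨ r a b ∨ r b a) {x y z : α}
    (hx : ReflTransGen r x z) (hy : ReflTransGen r y z) :
    ReflTransGen r x y ∨ ReflTransGen r y x := by
  induction hx generalizing y with
  | refl => exact .inr hy
  | tail hxa haz ih =>
    rcases hy.comparable_of_rel_of_parents_comparable hr haz with hya | hay
    · exact ih hya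
    · exact .inl (hxa.trans hay)

end Relation

theorem IsLeftParent.fwdEdge_or_fwdEdge_of_isRightParent {p : ℤ → ℝ} {z a b : ℤ}
    (ha : IsLeftParent p z a) (hb : IsRightParent p z b) :
    FwdEdge p a b ∨ FwdEdge p b a := by
  obtain ⟨haz, hpa, hamax⟩ := ha
  obtain ⟨hzb, hpb, hbmin⟩ := hb
  -- Every price strictly between `a` and `b` is at least `p z`, which exceeds `p b` and is
  -- at least `p a`; so whichever of `a`, `b` has the lower price is a parent of the other.
  rcases le_or_gt (p a) (p b) with hab | hab
  · refine .inl (.inl ⟨haz.trans hzb, hab, fun s hsb hps => ?_⟩)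
    by_contra! has
    rcases lt_trichotomy s z with hsz | rfl | hzs
    · linarith [hamax s hsz (by linarith)]
    · linarith
    · linarith [hbmin s hzs (by linarith)]
  · refine .inr (.inr ⟨haz.trans hzb, hab, fun s has hps => ?_⟩)
    by_contra! hsb
    rcases lt_trichotomy s z with hsz | rfl | hzs
    · linarith [hamax s hsz (by linarith)]
    · linarith
    · linarith [hbmin s hzs (by linarith)]

theorem FwdEdge.eq_or_fwdEdge_or_fwdEdge {p : ℤ → ℝ} {a b z : ℤ}
    (ha : FwdEdge p a z) (hb : FwdEdge p b z) : a = b ∨ FwdEdge p a b ∨ FwdEdge p b a := by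
  rcases ha with ha | ha <;> rcases hb with hb | hb
  · exact .inl (le_antisymm (hb.2.2 a ha.1 ha.2.1) (ha.2.2 b hb.1 hb.2.1))
  · exact .inr (ha.fwdEdge_or_fwdEdge_of_isRightParent hb)
  · exact .inr (hb.fwdEdge_or_fwdEdge_of_isRightParent ha).symm
  · exact .inl (le_antisymm (ha.2.2 b hb.1 hb.2.1) (hb.2.2 a ha.1 ha.2.1))

theorem ancestorSet_total_order_general (p : ℤ → ℝ) (t : ℤ) :
    ∀ t₁ ∈ AncestorSet p t, ∀ t₂ ∈ AncestorSet p t,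
      t₁ ∈ AncestorSet p t₂ ∨ t₂ ∈ AncestorSet p t₁ :=
  fun _ h₁ _ h₂ => Relation.ReflTransGen.total_of_parents_comparable
    FwdEdge.eq_or_fwdEdge_or_fwdEdge h₁ h₂

/-- If the ancestor set `C(t)` is finite, it is totally ordered by
ancestry: for all `t₁, t₂ ∈ C(t)`, either `t₁ ∈ C(t₂)` or `t₂ ∈ C(t₁)`. -/
theorem ancestorSet_total_order (p : ℤ → ℝ) (t : ℤ)
    (hfin : (AncestorSet p t).Finite) :
    ∀ t₁ ∈ AncestorSet p t, ∀ t₂ ∈ AncestorSet p t,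
      t₁ ∈ AncestorSet p t₂ ∨ t₂ ∈ AncestorSet p t₁ :=
  ancestorSet_total_order_general p t
end

section
/- Fix a horizon H ≥ 1, a finite set J of jobs where job j has start s_j, deadline d_j, length l_j ≥ 1 with 1 ≤ s_j ≤ d_j − l_j + 1 and d_j ≤ H, value v_j ≥ 0, and probability q_j ∈ [0, 1], and capacities B_t ∈ ℕ for t ∈ {1, …, H}. Then OPT is at most the optimal value of the linear program: maximize Σ_{j ∈ J} Σ_{t ∈ W_j} v_j q_j x_{j,t} over x_{j,t} ∈ [0, 1] subject to Σ_{t ∈ W_j} x_{j,t} ≤ 1 for every j ∈ J, and Σ_{j ∈ J} Σ_{t' ∈ [t − l_j + 1, t] ∩ W_j} q_j x_{j,t'} ≤ B_t for every t ∈ {1, …, H}. -/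
/-!
Fix for every realization `R` an optimal schedule `(A R, start R)` and let `y j t` be the
probability that job `j` is scheduled to start at `t`. Since `j` can only be scheduled when it is
realized, `∑_t y j t ≤ q j`, so `x j t = y j t / q j` lies in `[0, 1]` and satisfies the window
constraints; averaging the capacity constraints of the schedules over `R` gives the capacity
constraints of the LP, and the objective of `x` is the expected value of the chosen schedules,
i.e. `OPT`.
-/

/-- The window of starting times of a job with start `sj`, deadline `dj` and length `lj`:
`{sj, …, dj − lj + 1}`. -/
def window (sj dj lj : ℕ) : Finset ℕ := Finset.Icc sj (dj + 1 - lj)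

/-- `IsSchedule H s d l Bcap R Asub start` : the jobs of `Asub ⊆ R` are scheduled with
starting times `start` inside their windows, and at every slot `t ∈ {1, …, H}` the number
of scheduled jobs `j` with `start j ∈ [t − l j + 1, t]` is at most `Bcap t`. -/
def IsSchedule {J : Type*} [DecidableEq J] (H : ℕ) (s d l : J → ℕ) (Bcap : ℕ → ℕ)
    (R Asub : Finset J) (start : J → ℕ) : Prop :=
  Asub ⊆ R ∧ (∀ j ∈ Asub, start j ∈ window (s j) (d j) (l j)) ∧
    ∀ t ∈ Finset.Icc 1 H,
      (Asub.filter (fun j => start j ∈ Finset.Icc (t + 1 - l j) t)).card ≤ Bcap t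

/-- The maximum value of a feasible schedule of the realized set `R` of jobs. -/
noncomputable def maxVal {J : Type*} [DecidableEq J] (H : ℕ) (s d l : J → ℕ)
    (v : J → ℝ) (Bcap : ℕ → ℕ) (R : Finset J) : ℝ :=
  sSup {w : ℝ | ∃ (Asub : Finset J) (start : J → ℕ),
    IsSchedule H s d l Bcap R Asub start ∧ w = ∑ j ∈ Asub, v j}

/-- `OPT`: the expectation, over independent realizations in which job `j` is present with
probability `q j`, of the maximum value of a feasible schedule of the realized jobs. -/
noncomputable def OPTval {J : Type*} [Fintype J] [DecidableEq J] (H : ℕ)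
    (s d l : J → ℕ) (v q : J → ℝ) (Bcap : ℕ → ℕ) : ℝ :=
  ∑ R : Finset J, (∏ j ∈ R, q j) * (∏ j ∈ Rᶜ, (1 - q j)) * maxVal H s d l v Bcap R

/-- The optimal value of the expected-case LP: maximize
`Σ_j Σ_{t ∈ W_j} v_j q_j x_{j,t}` over `x_{j,t} ∈ [0, 1]` subject to
`Σ_{t ∈ W_j} x_{j,t} ≤ 1` for every `j` and
`Σ_j Σ_{t' ∈ [t−l_j+1, t] ∩ W_j} q_j x_{j,t'} ≤ B_t` for every `t ∈ {1, …, H}`. -/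
noncomputable def LPval {J : Type*} [Fintype J] (H : ℕ) (s d l : J → ℕ)
    (v q : J → ℝ) (Bcap : ℕ → ℕ) : ℝ :=
  sSup {w : ℝ | ∃ x : J → ℕ → ℝ,
    (∀ j t, 0 ≤ x j t ∧ x j t ≤ 1) ∧
    (∀ j, ∑ t ∈ window (s j) (d j) (l j), x j t ≤ 1) ∧
    (∀ t ∈ Finset.Icc 1 H,
      ∑ j, ∑ t' ∈ Finset.Icc (t + 1 - l j) t ∩ window (s j) (d j) (l j), q j * x j t'
        ≤ (Bcap t : ℝ)) ∧
    w = ∑ j, ∑ t ∈ window (s j) (d j) (l j), v j * q j * x j t}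

open Finset

section Realization

variable {J : Type*} [Fintype J] [DecidableEq J] (q : J → ℝ)

def realizationProb (R : Finset J) : ℝ := (∏ j ∈ R, q j) * ∏ j ∈ Rᶜ, (1 - q j)

variable {q}

lemma realizationProb_nonneg (hq : ∀ j, q j ∈ Set.Icc (0 : ℝ) 1) (R : Finset J) :
    0 ≤ realizationProb q R :=
  mul_nonneg (prod_nonneg fun j _ => (hq j).1) (prod_nonneg fun j _ => sub_nonneg.2 (hq j).2)

variable (q)

lemma sum_realizationProb : ∑ R, realizationProb q R = 1 := by
  simp [realizationProb, ← Fintype.prod_add]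

/-- Setting the factor `1 - q j` to `0` in `∏ (q i + (1 - q i))` kills exactly the realizations
without `j`. -/
lemma sum_realizationProb_of_mem (j : J) :
    ∑ R, (if j ∈ R then realizationProb q R else 0) = q j := by
  set g : J → ℝ := Function.update (fun i => 1 - q i) j 0
  have hterm : ∀ R : Finset J,
      (if j ∈ R then realizationProb q R else 0) = (∏ i ∈ R, q i) * ∏ i ∈ Rᶜ, g i := by
    intro R
    split_ifs with hj
    · exact congrArg _ <| prod_congr rfl fun i hi => by
        simp [g, show i ≠ j by rintro rfl; exact mem_compl.1 hi hj]
    · rw [prod_eq_zero (mem_compl.2 hj) (Function.update_self _ _ _), mul_zero]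
  have hfactor : ∀ i, q i + g i = if i = j then q j else 1 := by
    intro i
    rcases eq_or_ne i j with rfl | hi
    · simp [g]
    · simp [g, hi]
  simp_rw [hterm, ← Fintype.prod_add, hfactor, prod_ite_eq', if_pos (mem_univ j)]

end Realization

section StartMass

variable {Ω J : Type*} [Fintype Ω] [DecidableEq J]
  (p : Ω → ℝ) (A : Ω → Finset J) (start : Ω → J → ℕ)

def startMass (j : J) (t : ℕ) : ℝ := ∑ ω, if j ∈ A ω ∧ start ω j = t then p ω else 0

lemma startMass_nonneg (hp : ∀ ω, 0 ≤ p ω) (j : J) (t : ℕ) : 0 ≤ startMass p A start j t :=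
  sum_nonneg fun ω _ => by split_ifs; exacts [hp ω, le_rfl]

lemma sum_startMass (j : J) (T : Finset ℕ) :
    ∑ t ∈ T, startMass p A start j t = ∑ ω, if j ∈ A ω ∧ start ω j ∈ T then p ω else 0 := by
  simp only [startMass]
  rw [sum_comm]
  refine sum_congr rfl fun ω _ => ?_
  by_cases hj : j ∈ A ω <;> simp [hj]

lemma sum_mul_startMass_window [Fintype J] (s d l : J → ℕ) (v : J → ℝ)
    (hwin : ∀ ω, ∀ j ∈ A ω, start ω j ∈ window (s j) (d j) (l j)) :
    ∑ j, ∑ t ∈ window (s j) (d j) (l j), v j * startMass p A start j t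
      = ∑ ω, p ω * ∑ j ∈ A ω, v j := by
  have hmem : ∀ j, ∑ t ∈ window (s j) (d j) (l j), startMass p A start j t
      = ∑ ω, if j ∈ A ω then p ω else 0 := fun j => by
    rw [sum_startMass]
    exact sum_congr rfl fun ω _ => if_congr ⟨And.left, fun hj => ⟨hj, hwin ω j hj⟩⟩ rfl rfl
  simp_rw [← mul_sum, hmem, mul_sum, mul_ite, mul_zero]
  rw [sum_comm]
  simp_rw [← sum_filter, filter_mem_eq_inter, univ_inter, mul_comm]

end StartMass

section Schedules

variable {J : Type*} [DecidableEq J]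

lemma exists_isSchedule_maxVal_eq [Finite J] (H : ℕ) (s d l : J → ℕ) (v : J → ℝ) (Bcap : ℕ → ℕ)
    (R : Finset J) :
    ∃ (A : Finset J) (start : J → ℕ), IsSchedule H s d l Bcap R A start ∧
      maxVal H s d l v Bcap R = ∑ j ∈ A, v j := by
  have hne : {w : ℝ | ∃ (A : Finset J) (start : J → ℕ),
      IsSchedule H s d l Bcap R A start ∧ w = ∑ j ∈ A, v j}.Nonempty :=
    ⟨0, ∅, s, ⟨empty_subset _, by simp, by simp⟩, by simp⟩
  refine hne.csSup_mem ((Set.finite_range fun A : Finset J => ∑ j ∈ A, v j).subset ?_)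
  rintro w ⟨A, -, -, rfl⟩
  exact ⟨A, rfl⟩

variable [Fintype J] {H : ℕ} {s d l : J → ℕ} {Bcap : ℕ → ℕ}
  {A : Finset J → Finset J} {start : Finset J → J → ℕ}

lemma sum_startMass_realizationProb_le {q : J → ℝ} (hq : ∀ j, q j ∈ Set.Icc (0 : ℝ) 1)
    (hsched : ∀ R, IsSchedule H s d l Bcap R (A R) (start R)) (j : J) (T : Finset ℕ) :
    ∑ t ∈ T, startMass (realizationProb q) A start j t ≤ q j := by
  rw [sum_startMass, ← sum_realizationProb_of_mem q j]
  refine sum_le_sum fun R _ => ?_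
  split_ifs with hT hR hR
  exacts [le_rfl, absurd ((hsched R).1 hT.1) hR, realizationProb_nonneg hq R, le_rfl]

lemma sum_startMass_le_cap (p : Finset J → ℝ) (hp : ∀ R, 0 ≤ p R) (hp1 : ∑ R, p R = 1)
    (hsched : ∀ R, IsSchedule H s d l Bcap R (A R) (start R)) {t : ℕ} (ht : t ∈ Icc 1 H) :
    ∑ j, ∑ t' ∈ Icc (t + 1 - l j) t ∩ window (s j) (d j) (l j), startMass p A start j t'
      ≤ Bcap t := by
  have hcount : ∀ R, ∑ j, (if j ∈ A R ∧
      start R j ∈ Icc (t + 1 - l j) t ∩ window (s j) (d j) (l j) then (1 : ℝ) else 0)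
        ≤ Bcap t := fun R => by
    rw [sum_boole]
    refine Nat.cast_le.2 ((card_le_card fun j hj => ?_).trans ((hsched R).2.2 t ht))
    simp only [mem_filter, mem_univ, true_and, mem_inter] at hj ⊢
    exact ⟨hj.1, hj.2.1⟩
  calc ∑ j, ∑ t' ∈ Icc (t + 1 - l j) t ∩ window (s j) (d j) (l j), startMass p A start j t'
      = ∑ R, p R * ∑ j, (if j ∈ A R ∧
          start R j ∈ Icc (t + 1 - l j) t ∩ window (s j) (d j) (l j) then (1 : ℝ) else 0) := by
        simp_rw [sum_startMass, mul_sum, mul_ite, mul_one, mul_zero]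
        exact sum_comm
    _ ≤ ∑ R, p R * Bcap t := sum_le_sum fun R _ => mul_le_mul_of_nonneg_left (hcount R) (hp R)
    _ = Bcap t := by rw [← sum_mul, hp1, one_mul]

end Schedules

lemma le_LPval {J : Type*} [Fintype J] {H : ℕ} {s d l : J → ℕ} {v q : J → ℝ} {Bcap : ℕ → ℕ}
    (x : J → ℕ → ℝ) (h01 : ∀ j t, 0 ≤ x j t ∧ x j t ≤ 1)
    (hwin : ∀ j, ∑ t ∈ window (s j) (d j) (l j), x j t ≤ 1)
    (hcap : ∀ t ∈ Icc 1 H,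
      ∑ j, ∑ t' ∈ Icc (t + 1 - l j) t ∩ window (s j) (d j) (l j), q j * x j t' ≤ (Bcap t : ℝ)) :
    ∑ j, ∑ t ∈ window (s j) (d j) (l j), v j * q j * x j t ≤ LPval H s d l v q Bcap := by
  refine le_csSup ⟨∑ j, ∑ t ∈ window (s j) (d j) (l j), |v j * q j|, ?_⟩
    ⟨x, h01, hwin, hcap, rfl⟩
  rintro w ⟨y, hy01, -, -, rfl⟩
  refine sum_le_sum fun j _ => sum_le_sum fun t _ => (le_abs_self _).trans ?_
  rw [abs_mul, abs_of_nonneg (hy01 j t).1]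
  exact mul_le_of_le_one_right (abs_nonneg _) (hy01 j t).2

theorem opt_le_lp_general
    {J : Type*} [Fintype J] [DecidableEq J] (H : ℕ)
    (s d l : J → ℕ) (v q : J → ℝ) (Bcap : ℕ → ℕ)
    (hq : ∀ j, q j ∈ Set.Icc (0 : ℝ) 1) :
    OPTval H s d l v q Bcap ≤ LPval H s d l v q Bcap := by
  choose A start hsched hval using exists_isSchedule_maxVal_eq H s d l v Bcap
  set y := startMass (realizationProb q) A start
  have hy0 : ∀ j t, 0 ≤ y j t := startMass_nonneg _ A start (realizationProb_nonneg hq)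
  have hyq : ∀ j T, ∑ t ∈ T, y j t ≤ q j := sum_startMass_realizationProb_le hq hsched
  -- where `q j = 0` the division returns `0`, but then `y j t = 0` as well
  have hqy : ∀ j t, q j * (y j t / q j) = y j t := fun j t =>
    mul_div_cancel_of_imp' fun h0 => le_antisymm (by simpa [h0] using hyq j {t}) (hy0 j t)
  calc OPTval H s d l v q Bcap = ∑ R, realizationProb q R * ∑ j ∈ A R, v j := by
        simp only [OPTval, realizationProb, hval]
    _ = ∑ j, ∑ t ∈ window (s j) (d j) (l j), v j * q j * (y j t / q j) := by
        simp_rw [mul_assoc, hqy]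
        exact (sum_mul_startMass_window _ A start s d l v fun R => (hsched R).2.1).symm
    _ ≤ LPval H s d l v q Bcap := le_LPval _ ?_ ?_ ?_
  · exact fun j t => ⟨div_nonneg (hy0 j t) (hq j).1,
      div_le_one_of_le₀ (by simpa using hyq j {t}) (hq j).1⟩
  · exact fun j => by rw [← sum_div]; exact div_le_one_of_le₀ (hyq j _) (hq j).1
  · simp_rw [hqy]
    exact fun t =>
      sum_startMass_le_cap _ (realizationProb_nonneg hq) (sum_realizationProb q) hsched

/-- For any horizon `H ≥ 1`, finite job set `J` (with starts, deadlines,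
lengths, values, probabilities as stated) and capacities `B`, the expected offline optimum
`OPT` is at most the optimal value of the expected-case LP. -/
theorem opt_le_lp
    {J : Type*} [Fintype J] [DecidableEq J] (H : ℕ) (hH : 1 ≤ H)
    (s d l : J → ℕ) (v q : J → ℝ) (Bcap : ℕ → ℕ)
    (hl : ∀ j, 1 ≤ l j) (hs : ∀ j, 1 ≤ s j)
    (hwin : ∀ j, s j + l j ≤ d j + 1) (hd : ∀ j, d j ≤ H)
    (hv : ∀ j, 0 ≤ v j) (hq : ∀ j, q j ∈ Set.Icc (0 : ℝ) 1) :
    OPTval H s d l v q Bcap ≤ LPval H s d l v q Bcap :=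
  opt_le_lp_general H s d l v q Bcap hq
end
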